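/- arXiv:1710.01721 — 7 statements merged into one kernel-verified Lean document; each statement's English description precedes it below -/
import Mathlib

section
/- Let A be a real n×n matrix, let λ ≥ 0 and ε > 0, and let P be a real symmetric n×n matrix with inertia p (i.e., exactly p negative eigenvalues, n−p positive eigenvalues, and no zero eigenvalues, counted with multiplicity) such that AᵀP + PA ⪯ −2λP − εI. Then the matrix A + λI has exactly p complex eigenvalues (counted with algebraic multiplicity) with strictly positive real part and exactly n−p complex eigenvalues with strictly negative real part. -/
open Matrix

/-- `M ⪯ N` iff `N - M` is positive semidefinite. -/
def matLE {m : Type*} [Fintype m] (M N : Matrix m m ℝ) : Prop := (N - M).PosSemidef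

/-- A real symmetric matrix has inertia `p`: exactly `p` negative eigenvalues,
`card m − p` positive eigenvalues, and no zero eigenvalues, counted with multiplicity
(as roots of the characteristic polynomial). -/
def hasInertia {m : Type*} [Fintype m] [DecidableEq m]
    (P : Matrix m m ℝ) (p : ℕ) : Prop :=
  Multiset.countP (fun μ : ℝ => μ < 0) P.charpoly.roots = p ∧
  Multiset.countP (fun μ : ℝ => 0 < μ) P.charpoly.roots = Fintype.card m - p ∧
  (0 : ℝ) ∉ P.charpoly.roots

/-- Number of complex eigenvalues (with algebraic multiplicity) of a real matrix
with strictly positive real part. -/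
noncomputable def posReCount {m : Type*} [Fintype m] [DecidableEq m]
    (A : Matrix m m ℝ) : ℕ :=
  Multiset.countP (fun μ : ℂ => 0 < μ.re) (A.map Complex.ofReal).charpoly.roots

/-- Number of complex eigenvalues (with algebraic multiplicity) of a real matrix
with strictly negative real part. -/
noncomputable def negReCount {m : Type*} [Fintype m] [DecidableEq m]
    (A : Matrix m m ℝ) : ℕ :=
  Multiset.countP (fun μ : ℂ => μ.re < 0) (A.map Complex.ofReal).charpoly.roots

/-- The quadratic form `xᵀ P x`. -/
def quadForm {m : Type*} [Fintype m] (P : Matrix m m ℝ) (x : m → ℝ) : ℝ :=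
  x ⬝ᵥ P.mulVec x

/-- Euclidean norm on `m → ℝ`. -/
noncomputable def enorm {m : Type*} [Fintype m] (x : m → ℝ) : ℝ :=
  Real.sqrt (x ⬝ᵥ x)

/-- `J` is the Jacobian of `f`. -/
def IsJacobianOf {n : ℕ} (J : (Fin n → ℝ) → Matrix (Fin n) (Fin n) ℝ)
    (f : (Fin n → ℝ) → (Fin n → ℝ)) : Prop :=
  ∀ x, HasFDerivAt f (LinearMap.toContinuousLinearMap ((J x).mulVecLin)) x

/-!
Write `B = A + λI` and `Q(x, y) = x* P y` on `ℂⁿ`. The LMI gives `2 Re Q(x, Bx) ≤ -ε ‖x‖² < 0`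
for `x ≠ 0`: the Hermitian form `Q` strictly decreases along `B`. So `B` has no eigenvalue on the
imaginary axis, and `Q` is negative definite on the sum `E₊` of the generalized eigenspaces of `B`
for eigenvalues in the right half-plane, positive definite on the analogous `E₋` for the left
half-plane. (On an invariant subspace an eigenvector `v` is `Q`-negative; compress `B` to the
`Q`-orthogonal complement of `v`, which creates no new eigenvalues, and induct on dimension.)
Hence `E₊` meets the `(n - p)`-dimensional positive eigenspace of `P` trivially, and `E₋` the
`p`-dimensional negative one. As `dim E₊ + dim E₋ = n`, both bounds are equalities, and `dim E₊`,
`dim E₋` are the numbers of eigenvalues of `B` in the two half-planes.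
-/

open Module Polynomial

theorem LinearMap.charpoly_restrict_mul_charpoly_restrict {K V : Type*} [Field K] [AddCommGroup V]
    [Module K V] [FiniteDimensional K V] (f : Module.End K V) {p q : Submodule K V}
    (hpq : IsCompl p q) (hp : ∀ x ∈ p, f x ∈ p) (hq : ∀ x ∈ q, f x ∈ q) :
    (f.restrict hp).charpoly * (f.restrict hq).charpoly = f.charpoly := by
  let e := Submodule.prodEquivOfIsCompl p q hpq
  have : e.symm.conj f = (f.restrict hp).prodMap (f.restrict hq) := by
    refine LinearMap.ext fun x => ?_
    rw [LinearEquiv.conj_apply_apply, LinearEquiv.symm_symm, LinearEquiv.symm_apply_eq]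
    simp [e]
  rw [← charpoly_prodMap, ← this, LinearEquiv.charpoly_conj]

namespace Module.End

variable {K V : Type*} [Field K] [AddCommGroup V] [Module K V] (f : Module.End K V)

-- Eigenvalues of the map induced by `f` on `V ⧸ K ∙ v` are eigenvalues of `f`.
theorem exists_smul_add_smul_apply_eq_smul {v s : V} {μ ν a : K} (hv0 : v ≠ 0)
    (hv : f v = μ • v) (hs : f s = ν • s + a • v) (hsv : ∀ k : K, s + k • v ≠ 0) :
    ∃ b c : K, b • s + c • v ≠ 0 ∧ f (b • s + c • v) = ν • (b • s + c • v) := by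
  by_cases hνμ : ν = μ
  · exact ⟨0, 1, by simpa using hv0, by simp [hv, hνμ]⟩
  refine ⟨1, a / (ν - μ), by simpa using hsv _, ?_⟩
  have hk : a + a / (ν - μ) * μ = ν * (a / (ν - μ)) := by
    field_simp [sub_ne_zero.mpr hνμ]
    ring
  rw [one_smul, map_add, map_smul, hv, hs, smul_add, smul_smul, smul_smul, ← hk, add_smul,
    add_assoc]

theorem exists_eigenvector_mem [IsAlgClosed K] [FiniteDimensional K V]
    {W : Submodule K V} (hW : ∀ x ∈ W, f x ∈ W) (hW0 : W ≠ ⊥) :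
    ∃ μ : K, ∃ v ∈ W, v ≠ 0 ∧ f v = μ • v := by
  have : Nontrivial W := Submodule.nontrivial_iff_ne_bot.mpr hW0
  obtain ⟨μ, hμ⟩ := exists_eigenvalue (f.restrict hW)
  obtain ⟨v, hv⟩ := hμ.exists_hasEigenvector
  refine ⟨μ, v, v.2, by simpa using hv.2, ?_⟩
  simpa using congrArg Subtype.val hv.apply_eq_smul

def spectralSubspace (s : Set K) : Submodule K V := ⨆ μ ∈ s, f.maxGenEigenspace μ

theorem apply_mem_spectralSubspace (s : Set K) :
    ∀ x ∈ f.spectralSubspace s, f x ∈ f.spectralSubspace s := by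
  suffices f.spectralSubspace s ≤ (f.spectralSubspace s).comap f from fun x hx => this hx
  refine iSup₂_le fun μ hμ x hx => ?_
  exact le_biSup f.maxGenEigenspace hμ (mapsTo_maxGenEigenspace_of_comm (Commute.refl f) μ hx)

theorem disjoint_spectralSubspace {s t : Set K} (h : Disjoint s t) :
    Disjoint (f.spectralSubspace s) (f.spectralSubspace t) :=
  f.independent_maxGenEigenspace.disjoint_biSup_biSup h

theorem eigenvalue_mem_of_mem_spectralSubspace {s : Set K} {μ : K} {x : V}
    (hx : x ∈ f.spectralSubspace s) (hx0 : x ≠ 0) (hfx : f x = μ • x) : μ ∈ s := by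
  by_contra hμ
  have hx' : x ∈ f.spectralSubspace sᶜ :=
    le_biSup f.maxGenEigenspace hμ (eigenspace_le_maxGenEigenspace (mem_eigenspace_iff.mpr hfx))
  exact hx0 (Submodule.disjoint_def.mp (f.disjoint_spectralSubspace disjoint_compl_right) x hx hx')

theorem isCompl_spectralSubspace [IsAlgClosed K] [FiniteDimensional K V] (s : Set K) :
    IsCompl (f.spectralSubspace s) (f.spectralSubspace sᶜ) := by
  refine ⟨f.disjoint_spectralSubspace disjoint_compl_right, codisjoint_iff.mpr ?_⟩
  rw [spectralSubspace, spectralSubspace, ← iSup_union, Set.union_compl_self, iSup_univ,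
    iSup_maxGenEigenspace_eq_top]

theorem mem_of_mem_roots_charpoly_restrict [FiniteDimensional K V] (s : Set K) {μ : K}
    (hμ : μ ∈ (f.restrict (f.apply_mem_spectralSubspace s)).charpoly.roots) : μ ∈ s := by
  obtain ⟨v, hv⟩ :=
    ((hasEigenvalue_iff_isRoot_charpoly _ μ).mpr (isRoot_of_mem_roots hμ)).exists_hasEigenvector
  exact f.eigenvalue_mem_of_mem_spectralSubspace v.2 (by simpa using hv.2)
    (by simpa using congrArg Subtype.val hv.apply_eq_smul)

theorem finrank_spectralSubspace [IsAlgClosed K] [FiniteDimensional K V] (s : Set K)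
    [DecidablePred (· ∈ s)] :
    finrank K (f.spectralSubspace s) = f.charpoly.roots.countP (· ∈ s) := by
  rw [← f.charpoly_restrict_mul_charpoly_restrict (f.isCompl_spectralSubspace s)
      (f.apply_mem_spectralSubspace s) (f.apply_mem_spectralSubspace sᶜ),
    roots_mul (mul_ne_zero (LinearMap.charpoly_monic _).ne_zero
      (LinearMap.charpoly_monic _).ne_zero),
    Multiset.countP_add,
    Multiset.countP_eq_card.mpr fun μ hμ => f.mem_of_mem_roots_charpoly_restrict s hμ,
    Multiset.countP_eq_zero.mpr fun μ hμ => f.mem_of_mem_roots_charpoly_restrict sᶜ hμ,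
    add_zero, IsAlgClosed.card_roots_eq_natDegree, LinearMap.charpoly_natDegree]

end Module.End

namespace LinearMap

variable {V : Type*} [AddCommGroup V] [Module ℂ V] {Q : V →ₗ⋆[ℂ] V →ₗ[ℂ] ℂ}

theorem IsSymm.neg (hQ : Q.IsSymm) : (-Q).IsSymm :=
  ⟨fun x y => by simp [← hQ.eq x y]⟩

theorem IsSymm.im_apply_self (hQ : Q.IsSymm) (x : V) : (Q x x).im = 0 :=
  Complex.conj_eq_iff_im.mp (hQ.eq x x)

theorem IsSymm.re_apply_smul_self (hQ : Q.IsSymm) (μ : ℂ) (x : V) :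
    (Q x (μ • x)).re = μ.re * (Q x x).re := by
  simp [Complex.mul_re, hQ.im_apply_self]

theorem disjoint_of_re_apply_self_neg_of_pos {U U' : Submodule ℂ V}
    (hU : ∀ x ∈ U, x ≠ 0 → (Q x x).re < 0) (hU' : ∀ x ∈ U', x ≠ 0 → 0 < (Q x x).re) :
    Disjoint U U' :=
  Submodule.disjoint_def.mpr fun x hx hx' => by
    by_contra hx0
    linarith [hU x hx hx0, hU' x hx' hx0]

theorem exists_finrank_eq_card_of_isOrthoᵢ {ι : Type*} [Fintype ι] {b : ι → V}
    (hb : Q.IsOrthoᵢ b) (hpos : ∀ i, 0 < (Q (b i) (b i)).re) :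
    ∃ W : Submodule ℂ V, finrank ℂ W = Fintype.card ι ∧ ∀ x ∈ W, x ≠ 0 → 0 < (Q x x).re := by
  refine ⟨Submodule.span ℂ (Set.range b), finrank_span_eq_card ?_, fun x hx hx0 => ?_⟩
  · exact linearIndependent_of_isOrthoᵢ hb fun i h => by simpa [h] using hpos i
  obtain ⟨c, rfl⟩ := (Submodule.mem_span_range_iff_exists_fun ℂ).mp hx
  have hdiag : Q (∑ i, c i • b i) (∑ i, c i • b i) =
      ∑ i, (Complex.normSq (c i) : ℂ) * Q (b i) (b i) := by
    simp only [map_sum, map_smulₛₗ, sum_apply, smul_apply, smul_eq_mul, RingHom.id_apply]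
    refine Finset.sum_congr rfl fun i _ => ?_
    rw [Finset.sum_eq_single i (fun j _ hji => by rw [hb hji, mul_zero]) (by simp),
      ← mul_assoc, Complex.mul_conj]
  obtain ⟨i, hi⟩ : ∃ i, c i ≠ 0 := by
    by_contra! h
    simp [h] at hx0
  rw [hdiag, Complex.re_sum]
  refine Finset.sum_pos' (fun j _ => ?_) ⟨i, Finset.mem_univ _, ?_⟩
  · rw [Complex.re_ofReal_mul]; exact mul_nonneg (Complex.normSq_nonneg _) (hpos j).le
  · rw [Complex.re_ofReal_mul]; exact mul_pos (Complex.normSq_pos.mpr hi) (hpos i)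

theorem IsSymm.re_apply_self_neg_of_ker (hQ : Q.IsSymm) {W : Submodule ℂ V} {v : V}
    (hvW : v ∈ W) (hv : (Q v v).re < 0)
    (hker : ∀ s ∈ W ⊓ ker (Q v), s ≠ 0 → (Q s s).re < 0) {x : V} (hx : x ∈ W) (hx0 : x ≠ 0) :
    (Q x x).re < 0 := by
  have hv0 : Q v v ≠ 0 := fun h => by simp [h] at hv
  set a := Q v x / Q v v
  set s := x - a • v
  have hs : s ∈ W ⊓ ker (Q v) := by
    refine ⟨W.sub_mem hx (W.smul_mem a hvW), ?_⟩
    simp [s, a, div_mul_cancel₀ _ hv0]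
  have hsv : Q s v = 0 := by rw [← hQ.eq, mem_ker.mp hs.2, map_zero]
  have hx_eq : Q x x = Q s s + (Complex.normSq a : ℂ) * Q v v := by
    have : x = s + a • v := by simp [s]
    rw [this]
    simp only [map_add, map_smulₛₗ, add_apply, smul_apply, mem_ker.mp hs.2, hsv, smul_eq_mul,
      mul_zero, RingHom.id_apply]
    rw [← Complex.mul_conj]
    ring
  rw [hx_eq, Complex.add_re, Complex.re_ofReal_mul]
  by_cases hs0 : s = 0
  · have ha : a ≠ 0 := fun h => hx0 (by simpa [s, h] using hs0)
    simpa [hs0] using mul_neg_of_pos_of_neg (Complex.normSq_pos.mpr ha) hv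
  · nlinarith [hker s hs hs0, Complex.normSq_nonneg a]

theorem IsSymm.re_apply_self_neg_of_dissipative [FiniteDimensional ℂ V] (hQ : Q.IsSymm)
    {f : Module.End ℂ V} {W : Submodule ℂ V} (hfW : ∀ x ∈ W, f x ∈ W)
    (hdiss : ∀ x ∈ W, x ≠ 0 → (Q x (f x)).re < 0)
    (heig : ∀ μ : ℂ, ∀ x ∈ W, x ≠ 0 → f x = μ • x → 0 < μ.re) :
    ∀ x ∈ W, x ≠ 0 → (Q x x).re < 0 := by
  induction hd : finrank ℂ W using Nat.strong_induction_on generalizing f W with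
  | _ d ih =>
  intro x hx hx0
  obtain ⟨μ, v, hvW, hv0, hfv⟩ :=
    f.exists_eigenvector_mem hfW fun h => hx0 (by simpa [h] using hx)
  have hμ := heig μ v hvW hv0 hfv
  have hv : (Q v v).re < 0 := by
    have := hdiss v hvW hv0
    rw [hfv, hQ.re_apply_smul_self] at this
    exact neg_of_mul_neg_right this hμ.le
  have hc : Q v v ≠ 0 := fun h => by simp [h] at hv
  -- `g` is `f` followed by the `Q`-orthogonal projection onto `ker (Q v)` along `v`.
  set g : Module.End ℂ V := f - ((Q v v)⁻¹ • (Q v ∘ₗ f)).smulRight v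
  have hg : ∀ y, g y = f y - ((Q v v)⁻¹ * Q v (f y)) • v := fun y => by simp [g]
  set S := W ⊓ ker (Q v)
  have hsv : ∀ s ∈ S, Q s v = 0 := fun s hs => by rw [← hQ.eq, mem_ker.mp hs.2, map_zero]
  have hSW : S < W := by
    refine lt_of_le_of_ne inf_le_left fun h => hc ?_
    exact mem_ker.mp (h ▸ hvW : v ∈ S).2
  refine hQ.re_apply_self_neg_of_ker hvW hv
    (ih _ (hd ▸ Submodule.finrank_lt_finrank_of_lt hSW) (f := g) ?_ ?_ ?_ rfl) hx hx0
  · intro s hs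
    rw [hg]
    refine Submodule.mem_inf.mpr ⟨W.sub_mem (hfW s hs.1) (W.smul_mem _ hvW), ?_⟩
    rw [mem_ker, map_sub, map_smul, smul_eq_mul, mul_comm (Q v v)⁻¹, inv_mul_cancel_right₀ hc,
      sub_self]
  · intro s hs hs0
    rw [hg, map_sub, map_smul, hsv s hs, smul_zero, sub_zero]
    exact hdiss s hs.1 hs0
  · intro ν s hs hs0 hgs
    have hfs : f s = ν • s + ((Q v v)⁻¹ * Q v (f s)) • v := by
      rw [← hgs, hg, sub_add_cancel]
    have hs_ne : ∀ k : ℂ, s + k • v ≠ 0 := fun k hk => by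
      have := congrArg (Q v) hk
      rw [map_add, map_smul, mem_ker.mp hs.2, map_zero, smul_eq_mul, zero_add] at this
      exact hs0 (by simpa [(mul_eq_zero.mp this).resolve_right hc] using hk)
    obtain ⟨b, c, hw0, hfw⟩ := f.exists_smul_add_smul_apply_eq_smul hv0 hfv hfs hs_ne
    exact heig ν _ (W.add_mem (W.smul_mem b hs.1) (W.smul_mem c hvW)) hw0 hfw

theorem IsSymm.re_apply_self_pos_of_dissipative [FiniteDimensional ℂ V] (hQ : Q.IsSymm)
    {f : Module.End ℂ V} {W : Submodule ℂ V} (hfW : ∀ x ∈ W, f x ∈ W)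
    (hdiss : ∀ x ∈ W, x ≠ 0 → (Q x (f x)).re < 0)
    (heig : ∀ μ : ℂ, ∀ x ∈ W, x ≠ 0 → f x = μ • x → μ.re < 0) :
    ∀ x ∈ W, x ≠ 0 → 0 < (Q x x).re := by
  intro x hx hx0
  have := hQ.neg.re_apply_self_neg_of_dissipative (f := -f)
    (fun y hy => by simpa using W.neg_mem (hfW y hy))
    (fun y hy hy0 => by simpa using hdiss y hy hy0)
    (fun μ y hy hy0 hfy => by
      simpa using heig (-μ) y hy hy0 (by rw [neg_smul, ← hfy, neg_apply, neg_neg]))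
    x hx hx0
  simpa using this

theorem IsSymm.re_ne_zero_of_mem_roots_charpoly [FiniteDimensional ℂ V] (hQ : Q.IsSymm)
    {f : Module.End ℂ V} (hf : ∀ x ≠ 0, (Q x (f x)).re < 0) {μ : ℂ}
    (hμ : μ ∈ f.charpoly.roots) : μ.re ≠ 0 := by
  obtain ⟨x, hx⟩ := ((Module.End.hasEigenvalue_iff_isRoot_charpoly f μ).mpr
    (isRoot_of_mem_roots hμ)).exists_hasEigenvector
  have := hf x hx.2
  rw [hx.apply_eq_smul, hQ.re_apply_smul_self] at this
  exact left_ne_zero_of_mul (ne_of_lt this)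

/-- An inertia theorem of Ostrowski–Schneider type. -/
theorem IsSymm.countP_roots_charpoly_of_dissipative [FiniteDimensional ℂ V] (hQ : Q.IsSymm)
    {f : Module.End ℂ V} (hf : ∀ x ≠ 0, (Q x (f x)).re < 0) {Wpos Wneg : Submodule ℂ V}
    (hWpos : ∀ x ∈ Wpos, x ≠ 0 → 0 < (Q x x).re) (hWneg : ∀ x ∈ Wneg, x ≠ 0 → (Q x x).re < 0)
    (hdim : finrank ℂ Wpos + finrank ℂ Wneg = finrank ℂ V) :
    f.charpoly.roots.countP (fun μ => 0 < μ.re) = finrank ℂ Wneg ∧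
      f.charpoly.roots.countP (fun μ => μ.re < 0) = finrank ℂ Wpos := by
  set Epos := f.spectralSubspace {μ | 0 < μ.re}
  set Eneg := f.spectralSubspace {μ | μ.re < 0}
  have hEpos : ∀ x ∈ Epos, x ≠ 0 → (Q x x).re < 0 :=
    hQ.re_apply_self_neg_of_dissipative (f.apply_mem_spectralSubspace _) (fun x _ => hf x)
      fun _ _ hx hx0 hfx => f.eigenvalue_mem_of_mem_spectralSubspace hx hx0 hfx
  have hEneg : ∀ x ∈ Eneg, x ≠ 0 → 0 < (Q x x).re :=
    hQ.re_apply_self_pos_of_dissipative (f.apply_mem_spectralSubspace _) (fun x _ => hf x)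
      fun _ _ hx hx0 hfx => f.eigenvalue_mem_of_mem_spectralSubspace hx hx0 hfx
  have hpos := Submodule.finrank_add_finrank_le_of_disjoint
    (disjoint_of_re_apply_self_neg_of_pos hEpos hWpos)
  have hneg := Submodule.finrank_add_finrank_le_of_disjoint
    (disjoint_of_re_apply_self_neg_of_pos hWneg hEneg)
  have hcard : f.charpoly.roots.countP (fun μ => 0 < μ.re) +
      f.charpoly.roots.countP (fun μ => μ.re < 0) = finrank ℂ V := by
    rw [← LinearMap.charpoly_natDegree f, ← IsAlgClosed.card_roots_eq_natDegree,
      Multiset.card_eq_countP_add_countP (fun μ => 0 < μ.re)]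
    congr 1
    refine Multiset.countP_congr rfl fun μ hμ => propext ?_
    have := hQ.re_ne_zero_of_mem_roots_charpoly hf hμ
    exact ⟨fun h => not_lt.mpr h.le, fun h => lt_of_le_of_ne (not_lt.mp h) this⟩
  have hEpos_dim : finrank ℂ Epos = f.charpoly.roots.countP (fun μ => 0 < μ.re) :=
    f.finrank_spectralSubspace _
  have hEneg_dim : finrank ℂ Eneg = f.charpoly.roots.countP (fun μ => μ.re < 0) :=
    f.finrank_spectralSubspace _
  constructor <;> omega

end LinearMap

namespace Matrix

theorem IsSymm.isHermitian_map_ofReal {m : Type*} {P : Matrix m m ℝ} (hP : P.IsSymm) :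
    (P.map Complex.ofReal).IsHermitian :=
  IsHermitian.map hP _ fun _ => (Complex.conj_ofReal _).symm

variable {m : Type*} [Fintype m]

theorem re_star_dotProduct_map_ofReal_mulVec (M : Matrix m m ℝ) (x : m → ℂ) :
    (star x ⬝ᵥ M.map Complex.ofReal *ᵥ x).re =
      (fun i => (x i).re) ⬝ᵥ M *ᵥ (fun i => (x i).re) +
        (fun i => (x i).im) ⬝ᵥ M *ᵥ (fun i => (x i).im) := by
  simp only [dotProduct, mulVec, Finset.mul_sum, Complex.re_sum, ← Finset.sum_add_distrib]
  refine Finset.sum_congr rfl fun i _ => Finset.sum_congr rfl fun j _ => ?_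
  simp [Complex.mul_re]

variable [DecidableEq m]

theorem IsSymm.two_mul_dotProduct_mulVec_le_of_matLE {A P : Matrix m m ℝ} {lam eps : ℝ}
    (hP : P.IsSymm) (hLMI : matLE (Aᵀ * P + P * A) (-((2 * lam) • P) - eps • 1)) (a : m → ℝ) :
    2 * (a ⬝ᵥ (P * (A + lam • 1)) *ᵥ a) ≤ -eps * (a ⬝ᵥ a) := by
  have h := hLMI.dotProduct_mulVec_nonneg a
  have hsym : a ⬝ᵥ (Aᵀ * P) *ᵥ a = a ⬝ᵥ (P * A) *ᵥ a := by
    rw [← mulVec_mulVec, ← mulVec_mulVec, dotProduct_mulVec a Aᵀ, vecMul_transpose,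
      dotProduct_comm (A *ᵥ a), dotProduct_mulVec a P, ← mulVec_transpose, hP.eq]
  simp only [star_trivial, sub_mulVec, add_mulVec, neg_mulVec, smul_mulVec, one_mulVec,
    dotProduct_sub, dotProduct_add, dotProduct_neg, dotProduct_smul, smul_eq_mul, hsym] at h
  simp only [mul_add, Matrix.mul_smul, mul_one, add_mulVec, smul_mulVec, dotProduct_add,
    dotProduct_smul, smul_eq_mul]
  linarith

theorem IsHermitian.roots_charpoly_of_map_ofReal {P : Matrix m m ℝ}
    (hP : (P.map Complex.ofReal).IsHermitian) :
    P.charpoly.roots = Multiset.map hP.eigenvalues Finset.univ.val := by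
  have : P.charpoly = ∏ i, (X - C (hP.eigenvalues i)) := by
    apply Polynomial.map_injective Complex.ofRealHom Complex.ofReal_injective
    rw [← charpoly_map, Polynomial.map_prod]
    simp only [Polynomial.map_sub, map_X, map_C]
    exact hP.charpoly_eq
  rw [this, roots_prod _ _ (by simp [Finset.prod_ne_zero_iff, X_sub_C_ne_zero])]
  simp

noncomputable abbrev sesqForm (M : Matrix m m ℂ) : (m → ℂ) →ₗ⋆[ℂ] (m → ℂ) →ₗ[ℂ] ℂ :=
  M.toLinearMapₛₗ₂' ℂ (starRingEnd ℂ) (RingHom.id ℂ)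

theorem sesqForm_apply (M : Matrix m m ℂ) (x y : m → ℂ) : M.sesqForm x y = star x ⬝ᵥ M *ᵥ y := by
  simp only [sesqForm, toLinearMapₛₗ₂'_apply, dotProduct, mulVec, Finset.mul_sum, smul_eq_mul,
    RingHom.id_apply, Pi.star_apply, RCLike.star_def]
  exact Finset.sum_congr rfl fun _ _ => Finset.sum_congr rfl fun _ _ => by ring

theorem IsHermitian.isSymm_sesqForm {M : Matrix m m ℂ} (hM : M.IsHermitian) :
    M.sesqForm.IsSymm := by
  refine ⟨fun x y => ?_⟩
  rw [sesqForm_apply, sesqForm_apply, ← Complex.star_def, star_dotProduct, star_star, star_mulVec,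
    hM.eq, dotProduct_mulVec]

theorem IsHermitian.sesqForm_eigenvectorBasis {M : Matrix m m ℂ} (hM : M.IsHermitian) (i j : m) :
    M.sesqForm (hM.eigenvectorBasis i) (hM.eigenvectorBasis j) =
      if i = j then (hM.eigenvalues i : ℂ) else 0 := by
  rw [sesqForm_apply, mulVec_eigenvectorBasis, dotProduct_smul, dotProduct_comm,
    ← EuclideanSpace.inner_eq_star_dotProduct,
    orthonormal_iff_ite.mp hM.eigenvectorBasis.orthonormal]
  split_ifs with h <;> simp [h]

theorem IsHermitian.exists_finrank_eq_card_eigenvalues {M : Matrix m m ℂ} (hM : M.IsHermitian) :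
    ∃ Wpos Wneg : Submodule ℂ (m → ℂ),
      finrank ℂ Wpos = Fintype.card {i // 0 < hM.eigenvalues i} ∧
      finrank ℂ Wneg = Fintype.card {i // hM.eigenvalues i < 0} ∧
      (∀ x ∈ Wpos, x ≠ 0 → 0 < (M.sesqForm x x).re) ∧
      (∀ x ∈ Wneg, x ≠ 0 → (M.sesqForm x x).re < 0) := by
  have horth (s : Set m) : M.sesqForm.IsOrthoᵢ fun i : s => ⇑(hM.eigenvectorBasis i) :=
    fun i j hij => (hM.sesqForm_eigenvectorBasis i j).trans (if_neg (Subtype.val_injective.ne hij))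
  have hdiag (i : m) : (M.sesqForm (hM.eigenvectorBasis i) (hM.eigenvectorBasis i)).re =
      hM.eigenvalues i := by
    rw [hM.sesqForm_eigenvectorBasis, if_pos rfl, Complex.ofReal_re]
  obtain ⟨Wpos, hdim_pos, hpos⟩ := LinearMap.exists_finrank_eq_card_of_isOrthoᵢ
    (horth {i | 0 < hM.eigenvalues i}) fun i => (hdiag i).symm ▸ i.2
  obtain ⟨Wneg, hdim_neg, hneg⟩ := LinearMap.exists_finrank_eq_card_of_isOrthoᵢ (Q := -M.sesqForm)
    (fun i j hij => by simpa using horth {i | hM.eigenvalues i < 0} hij)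
    fun i => by simpa [hdiag] using neg_pos.mpr (show hM.eigenvalues i < 0 from i.2)
  exact ⟨Wpos, Wneg, hdim_pos, hdim_neg, hpos, fun x hx hx0 => by simpa using hneg x hx hx0⟩

theorem IsHermitian.card_eigenvalues_of_hasInertia {P : Matrix m m ℝ}
    (hP : (P.map Complex.ofReal).IsHermitian) {p : ℕ} (h : hasInertia P p) :
    Fintype.card {i // hP.eigenvalues i < 0} = p ∧
      Fintype.card {i // 0 < hP.eigenvalues i} = Fintype.card m - p := by
  obtain ⟨hneg, hpos, -⟩ := h
  rw [hP.roots_charpoly_of_map_ofReal, Multiset.countP_map] at hneg hpos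
  exact ⟨(Fintype.card_subtype _).trans hneg, (Fintype.card_subtype _).trans hpos⟩

open scoped ComplexOrder in
theorem IsSymm.re_sesqForm_mulVec_neg_of_matLE {A P : Matrix m m ℝ} {lam eps : ℝ}
    (hP : P.IsSymm) (heps : 0 < eps)
    (hLMI : matLE (Aᵀ * P + P * A) (-((2 * lam) • P) - eps • 1)) {x : m → ℂ} (hx : x ≠ 0) :
    ((P.map Complex.ofReal).sesqForm x ((A + lam • 1).map Complex.ofReal *ᵥ x)).re < 0 := by
  have hnorm := re_star_dotProduct_map_ofReal_mulVec 1 x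
  rw [Matrix.map_one _ Complex.ofReal_zero Complex.ofReal_one, one_mulVec] at hnorm
  simp only [one_mulVec] at hnorm
  have hx' := hnorm ▸ (Complex.pos_iff.mp (dotProduct_star_self_pos_iff.mpr hx)).1
  have hmap : (P * (A + lam • 1)).map Complex.ofReal =
      P.map Complex.ofReal * (A + lam • 1).map Complex.ofReal :=
    Matrix.map_mul (f := Complex.ofRealHom)
  rw [sesqForm_apply, mulVec_mulVec, ← hmap, re_star_dotProduct_map_ofReal_mulVec]
  linarith [hP.two_mul_dotProduct_mulVec_le_of_matLE hLMI (fun i => (x i).re),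
    hP.two_mul_dotProduct_mulVec_le_of_matLE hLMI (fun i => (x i).im), mul_pos heps hx']

end Matrix

theorem lmi_dominance_implies_spectral_splitting_general {n : ℕ}
    (A P : Matrix (Fin n) (Fin n) ℝ) (p : ℕ) (lam eps : ℝ)
    (heps : 0 < eps)
    (hPsymm : P.IsSymm) (hPinertia : hasInertia P p)
    (hLMI : matLE (Aᵀ * P + P * A)
      (-((2 * lam) • P) - eps • (1 : Matrix (Fin n) (Fin n) ℝ))) :
    posReCount (A + lam • (1 : Matrix (Fin n) (Fin n) ℝ)) = p ∧
    negReCount (A + lam • (1 : Matrix (Fin n) (Fin n) ℝ)) = n - p := by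
  have hPc := hPsymm.isHermitian_map_ofReal
  obtain ⟨hcard_neg, hcard_pos⟩ := hPc.card_eigenvalues_of_hasInertia hPinertia
  obtain ⟨Wpos, Wneg, hdim_pos, hdim_neg, hWpos, hWneg⟩ := hPc.exists_finrank_eq_card_eigenvalues
  rw [Fintype.card_fin] at hcard_pos
  have hp : p ≤ n := hcard_neg ▸ (Fintype.card_subtype_le _).trans (Fintype.card_fin n).le
  have hcount := hPc.isSymm_sesqForm.countP_roots_charpoly_of_dissipative
    (f := ((A + lam • 1).map Complex.ofReal).mulVecLin)
    (fun x hx => hPsymm.re_sesqForm_mulVec_neg_of_matLE heps hLMI hx) hWpos hWneg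
    (by rw [hdim_pos, hdim_neg, hcard_pos, hcard_neg, finrank_fin_fun]; omega)
  rw [charpoly_mulVecLin, hdim_neg, hdim_pos, hcard_neg, hcard_pos] at hcount
  exact hcount

/-- strict p-dominance LMI implies spectral splitting of A + λI. -/
theorem lmi_dominance_implies_spectral_splitting {n : ℕ}
    (A P : Matrix (Fin n) (Fin n) ℝ) (p : ℕ) (lam eps : ℝ)
    (hlam : 0 ≤ lam) (heps : 0 < eps)
    (hPsymm : P.IsSymm) (hPinertia : hasInertia P p)
    (hLMI : matLE (Aᵀ * P + P * A)
      (-((2 * lam) • P) - eps • (1 : Matrix (Fin n) (Fin n) ℝ))) :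
    posReCount (A + lam • (1 : Matrix (Fin n) (Fin n) ℝ)) = p ∧
    negReCount (A + lam • (1 : Matrix (Fin n) (Fin n) ℝ)) = n - p :=
  lmi_dominance_implies_spectral_splitting_general A P p lam eps heps hPsymm hPinertia hLMI
end

section
/- Let A be a real n×n matrix, let λ ≥ 0 and ε > 0, and let P be a real symmetric n×n matrix with inertia p such that AᵀP + PA ⪯ −2λP − εI. Then the cone K⁻ = { x ∈ ℝⁿ : xᵀPx ≤ 0 } is forward invariant and strictly contracted under the linear flow: for every t ≥ 0 and every x with xᵀPx ≤ 0 one has (exp(At)x)ᵀP(exp(At)x) ≤ 0, and for every t > 0 and every x ≠ 0 with xᵀPx ≤ 0 one has (exp(At)x)ᵀP(exp(At)x) < 0. -/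
open Matrix

/-!
Along a trajectory `y t = exp (t A) x` the function `V t = yᵀ P y` has derivative
`yᵀ (Aᵀ P + P A) y ≤ -2λ V - ε |y|²`, so `exp (2λ t) V t` is nonincreasing, and strictly
decreasing when `x ≠ 0` because `exp (t A)` is invertible. Hence `V 0 ≤ 0` forces `V t ≤ 0`
for `t ≥ 0` and `V t < 0` for `t > 0`.
-/
open NormedSpace

theorem HasDerivAt.dotProduct {m : Type*} [Fintype m] {f g : ℝ → m → ℝ} {f' g' : m → ℝ}
    {t : ℝ} (hf : HasDerivAt f f' t) (hg : HasDerivAt g g' t) :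
    HasDerivAt (fun s => f s ⬝ᵥ g s) (f' ⬝ᵥ g t + f t ⬝ᵥ g') t := by
  rw [_root_.dotProduct, _root_.dotProduct, ← Finset.sum_add_distrib]
  exact HasDerivAt.fun_sum fun i _ => (hasDerivAt_pi.1 hf i).mul (hasDerivAt_pi.1 hg i)

theorem HasDerivAt.quadForm {m : Type*} [Fintype m] (P : Matrix m m ℝ) {y : ℝ → m → ℝ}
    {y' : m → ℝ} {t : ℝ} (hy : HasDerivAt y y' t) :
    HasDerivAt (fun s => quadForm P (y s)) (y' ⬝ᵥ P *ᵥ y t + y t ⬝ᵥ P *ᵥ y') t :=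
  hy.dotProduct (P.mulVecLin.toContinuousLinearMap.hasFDerivAt.comp_hasDerivAt t hy)

theorem hasDerivAt_exp_smul_mulVec {m : Type*} [Fintype m] [DecidableEq m]
    (A : Matrix m m ℝ) (x : m → ℝ) (t : ℝ) :
    HasDerivAt (fun s : ℝ => exp (s • A) *ᵥ x) (A *ᵥ (exp (t • A) *ᵥ x)) t := by
  let : NormedRing (Matrix m m ℝ) := Matrix.linftyOpNormedRing
  let : NormedAlgebra ℝ (Matrix m m ℝ) := Matrix.linftyOpNormedAlgebra
  rw [mulVec_mulVec]
  exact ((mulVecBilin ℝ ℝ).flip x).toContinuousLinearMap.hasFDerivAt.comp_hasDerivAt t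
    (hasDerivAt_exp_smul_const' A t)

theorem exp_mulVec_ne_zero {m : Type*} [Fintype m] [DecidableEq m] (A : Matrix m m ℝ)
    {x : m → ℝ} (hx : x ≠ 0) : exp A *ᵥ x ≠ 0 := by
  rw [← mulVec_zero (exp A)]
  exact (mulVec_injective_iff_isUnit.2 (isUnit_exp A)).ne hx

theorem transpose_mul_add_mul_quadForm {m : Type*} [Fintype m] (A P : Matrix m m ℝ)
    (u : m → ℝ) :
    (A *ᵥ u) ⬝ᵥ P *ᵥ u + u ⬝ᵥ P *ᵥ (A *ᵥ u) = quadForm (Aᵀ * P + P * A) u := by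
  rw [quadForm, add_mulVec, dotProduct_add, ← mulVec_mulVec, ← mulVec_mulVec,
    dotProduct_mulVec u Aᵀ, vecMul_transpose]

theorem hasDerivAt_quadForm_exp_smul_mulVec {m : Type*} [Fintype m] [DecidableEq m]
    (A P : Matrix m m ℝ) (x : m → ℝ) (t : ℝ) :
    HasDerivAt (fun s : ℝ => quadForm P (exp (s • A) *ᵥ x))
      (quadForm (Aᵀ * P + P * A) (exp (t • A) *ᵥ x)) t := by
  rw [← transpose_mul_add_mul_quadForm]
  exact (hasDerivAt_exp_smul_mulVec A x t).quadForm P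

theorem quadForm_le_of_matLE {m : Type*} [Fintype m] {M N : Matrix m m ℝ} (h : matLE M N)
    (x : m → ℝ) : quadForm M x ≤ quadForm N x := by
  have := h.dotProduct_mulVec_nonneg x
  rw [star_trivial, sub_mulVec, dotProduct_sub] at this
  exact sub_nonneg.1 this

theorem quadForm_neg_smul_sub_smul_one {m : Type*} [Fintype m] [DecidableEq m]
    (P : Matrix m m ℝ) (c e : ℝ) (x : m → ℝ) :
    quadForm (-(c • P) - e • 1) x = -c * quadForm P x - e * (x ⬝ᵥ x) := by
  simp only [quadForm, sub_mulVec, neg_mulVec, smul_mulVec, one_mulVec, dotProduct_sub,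
    dotProduct_neg, dotProduct_smul, smul_eq_mul, neg_mul]

section Comparison

variable {V V' : ℝ → ℝ} {c : ℝ}

theorem hasDerivAt_exp_mul_mul (hV : ∀ s, HasDerivAt V (V' s) s) (s : ℝ) :
    HasDerivAt (fun s => Real.exp (c * s) * V s) (Real.exp (c * s) * (c * V s + V' s)) s :=
  (((hasDerivAt_id s).const_mul c).exp.mul (hV s)).congr_deriv (by simp only [id]; ring)

theorem nonpos_of_hasDerivAt_le_neg_mul (hV : ∀ s, HasDerivAt V (V' s) s)
    (hV' : ∀ s, V' s ≤ -c * V s) (h₀ : V 0 ≤ 0) {t : ℝ} (ht : 0 ≤ t) : V t ≤ 0 := by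
  have hanti : Antitone fun s => Real.exp (c * s) * V s :=
    antitone_of_hasDerivAt_nonpos (hasDerivAt_exp_mul_mul hV) fun s =>
      mul_nonpos_of_nonneg_of_nonpos (Real.exp_pos _).le (by linarith [hV' s])
  have := hanti ht
  simp only [mul_zero, Real.exp_zero, one_mul] at this
  exact nonpos_of_mul_nonpos_right (this.trans h₀) (Real.exp_pos _)

theorem neg_of_hasDerivAt_lt_neg_mul (hV : ∀ s, HasDerivAt V (V' s) s)
    (hV' : ∀ s, V' s < -c * V s) (h₀ : V 0 ≤ 0) {t : ℝ} (ht : 0 < t) : V t < 0 := by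
  have hanti : StrictAnti fun s => Real.exp (c * s) * V s :=
    strictAnti_of_hasDerivAt_neg (hasDerivAt_exp_mul_mul hV) fun s =>
      mul_neg_of_pos_of_neg (Real.exp_pos _) (by linarith [hV' s])
  have := hanti ht
  simp only [mul_zero, Real.exp_zero, one_mul] at this
  exact (pos_iff_neg_of_mul_neg (this.trans_le h₀)).1 (Real.exp_pos _)

end Comparison

theorem cone_Kminus_forward_invariant_general {n : ℕ}
    (A P : Matrix (Fin n) (Fin n) ℝ) (lam eps : ℝ)
    (heps : 0 < eps)
    (hLMI : matLE (Aᵀ * P + P * A)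
      (-((2 * lam) • P) - eps • (1 : Matrix (Fin n) (Fin n) ℝ))) :
    (∀ t : ℝ, 0 ≤ t → ∀ x : Fin n → ℝ, quadForm P x ≤ 0 →
      quadForm P ((NormedSpace.exp (t • A)).mulVec x) ≤ 0) ∧
    (∀ t : ℝ, 0 < t → ∀ x : Fin n → ℝ, x ≠ 0 → quadForm P x ≤ 0 →
      quadForm P ((NormedSpace.exp (t • A)).mulVec x) < 0) := by
  have hLyap : ∀ (x : Fin n → ℝ) (s : ℝ),
      quadForm (Aᵀ * P + P * A) (exp (s • A) *ᵥ x) ≤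
        -(2 * lam) * quadForm P (exp (s • A) *ᵥ x)
        - eps * ((exp (s • A) *ᵥ x) ⬝ᵥ (exp (s • A) *ᵥ x)) := fun x s => by
    simpa only [quadForm_neg_smul_sub_smul_one] using quadForm_le_of_matLE hLMI _
  have hstart : ∀ x, quadForm P (exp ((0 : ℝ) • A) *ᵥ x) = quadForm P x := by
    simp only [zero_smul, exp_zero, one_mulVec, forall_const]
  have hsq : ∀ v : Fin n → ℝ, 0 ≤ v ⬝ᵥ v := fun v =>
    Finset.sum_nonneg fun i _ => mul_self_nonneg (v i)
  refine ⟨fun t ht x hx => ?_, fun t ht x hx0 hx => ?_⟩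
  · refine nonpos_of_hasDerivAt_le_neg_mul (c := 2 * lam)
      (hasDerivAt_quadForm_exp_smul_mulVec A P x)
      (fun s => (hLyap x s).trans ?_) ((hstart x).trans_le hx) ht
    exact sub_le_self _ (mul_nonneg heps.le (hsq _))
  · refine neg_of_hasDerivAt_lt_neg_mul (c := 2 * lam)
      (hasDerivAt_quadForm_exp_smul_mulVec A P x)
      (fun s => (hLyap x s).trans_lt ?_) ((hstart x).trans_le hx) ht
    exact sub_lt_self _ (mul_pos heps ((hsq _).lt_of_ne'
      (dotProduct_self_eq_zero.not.2 (exp_mulVec_ne_zero (s • A) hx0))))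

/-- the cone K⁻ = {x : xᵀPx ≤ 0} is forward invariant and strictly
contracted by the linear flow exp(At). -/
theorem cone_Kminus_forward_invariant {n : ℕ}
    (A P : Matrix (Fin n) (Fin n) ℝ) (p : ℕ) (lam eps : ℝ)
    (hlam : 0 ≤ lam) (heps : 0 < eps)
    (hPsymm : P.IsSymm) (hPinertia : hasInertia P p)
    (hLMI : matLE (Aᵀ * P + P * A)
      (-((2 * lam) • P) - eps • (1 : Matrix (Fin n) (Fin n) ℝ))) :
    (∀ t : ℝ, 0 ≤ t → ∀ x : Fin n → ℝ, quadForm P x ≤ 0 →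
      quadForm P ((NormedSpace.exp (t • A)).mulVec x) ≤ 0) ∧
    (∀ t : ℝ, 0 < t → ∀ x : Fin n → ℝ, x ≠ 0 → quadForm P x ≤ 0 →
      quadForm P ((NormedSpace.exp (t • A)).mulVec x) < 0) :=
  cone_Kminus_forward_invariant_general A P lam eps heps hLMI
end

section
/- Under the hypotheses of the previous interconnection setting—Σᵢ (i ∈ {1,2}) linear systems ẋᵢ = Aᵢxᵢ + Bᵢuᵢ, yᵢ = Cᵢxᵢ + Dᵢuᵢ that are pᵢ-dissipative with common rate λ ≥ 0, margins εᵢ ≥ 0, storages Pᵢ of inertia pᵢ and supply matrices (Qᵢ, Lᵢ, Rᵢ), interconnected by u₁ = −y₂ + v₁, u₂ = y₁ + v₂—assume additionally that the symmetric matrix [[Q₁+R₂, −L₁+L₂ᵀ],[−L₁ᵀ+L₂, Q₂+R₁]] is negative semidefinite and that v₁ = 0 and v₂ = 0. Then, with P = diag(P₁,P₂) and ε = min(ε₁,ε₂), every tuple (x₁,x₂,u₁,u₂) satisfying y₁ = C₁x₁ + D₁u₁, y₂ = C₂x₂ + D₂u₂, u₁ = −y₂ and u₂ = y₁ satisfies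 ẋᵀPx + xᵀPẋ + 2λ·xᵀPx + ε·xᵀx ≤ 0, where x = (x₁,x₂) and ẋ = (A₁x₁+B₁u₁, A₂x₂+B₂u₂); that is, the closed-loop system is (p₁+p₂)-dominant with rate λ (strictly if ε₁ > 0 and ε₂ > 0). -/
/-!
Adding the two dissipation inequalities, the storage terms combine into those of
`diag(P₁, P₂)` (the margin can only shrink to `min ε₁ ε₂`), while under the feedback
`u₁ = -y₂`, `u₂ = y₁` the two supplies add up exactly to the quadratic form of the closed-loop
supply matrix at `(y₁, y₂)`, which is nonpositive. The inertias add because the characteristic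
polynomial of `diag(P₁, P₂)` is the product of those of `P₁` and `P₂`.
-/

open Matrix

def storageRate {n : Type*} [Fintype n] (P : Matrix n n ℝ) (lam eps : ℝ) (x dx : n → ℝ) : ℝ :=
  dx ⬝ᵥ P *ᵥ x + x ⬝ᵥ P *ᵥ dx + 2 * lam * (x ⬝ᵥ P *ᵥ x) + eps * (x ⬝ᵥ x)

def supplyRate {k l : Type*} [Fintype k] [Fintype l] (Q : Matrix k k ℝ) (L : Matrix k l ℝ)
    (R : Matrix l l ℝ) (y : k → ℝ) (u : l → ℝ) : ℝ :=
  y ⬝ᵥ Q *ᵥ y + y ⬝ᵥ L *ᵥ u + u ⬝ᵥ Lᵀ *ᵥ y + u ⬝ᵥ R *ᵥ u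

section Inertia

variable {m n : Type*} [Fintype m] [Fintype n] [DecidableEq m] [DecidableEq n]

theorem charpoly_roots_fromBlocks_zero (P₁ : Matrix m m ℝ) (P₂ : Matrix n n ℝ) :
    (fromBlocks P₁ 0 0 P₂).charpoly.roots = P₁.charpoly.roots + P₂.charpoly.roots := by
  rw [charpoly_fromBlocks_zero₁₂,
    Polynomial.roots_mul (mul_ne_zero P₁.charpoly_monic.ne_zero P₂.charpoly_monic.ne_zero)]

theorem hasInertia.le_card {P : Matrix m m ℝ} {p : ℕ} (hP : hasInertia P p) :
    p ≤ Fintype.card m :=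
  calc p = Multiset.countP (· < 0) P.charpoly.roots := hP.1.symm
    _ ≤ Multiset.card P.charpoly.roots := Multiset.countP_le_card _ _
    _ ≤ P.charpoly.natDegree := Polynomial.card_roots' _
    _ = Fintype.card m := P.charpoly_natDegree_eq_dim

theorem hasInertia.fromBlocks_zero {P₁ : Matrix m m ℝ} {P₂ : Matrix n n ℝ} {p₁ p₂ : ℕ}
    (h₁ : hasInertia P₁ p₁) (h₂ : hasInertia P₂ p₂) :
    hasInertia (fromBlocks P₁ 0 0 P₂) (p₁ + p₂) := by
  have hle₁ := h₁.le_card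
  have hle₂ := h₂.le_card
  obtain ⟨hneg₁, hpos₁, hzero₁⟩ := h₁
  obtain ⟨hneg₂, hpos₂, hzero₂⟩ := h₂
  simp only [hasInertia, charpoly_roots_fromBlocks_zero, Multiset.countP_add, Multiset.mem_add,
    Fintype.card_sum]
  exact ⟨by rw [hneg₁, hneg₂], by omega, not_or.mpr ⟨hzero₁, hzero₂⟩⟩

end Inertia

section Dissipativity

variable {m n k l : Type*} [Fintype m] [Fintype n] [Fintype k] [Fintype l]

theorem storageRate_fromBlocks_zero_le (P₁ : Matrix m m ℝ) (P₂ : Matrix n n ℝ)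
    (lam eps₁ eps₂ : ℝ) (x₁ dx₁ : m → ℝ) (x₂ dx₂ : n → ℝ) :
    storageRate (fromBlocks P₁ 0 0 P₂) lam (min eps₁ eps₂) (Sum.elim x₁ x₂) (Sum.elim dx₁ dx₂) ≤
      storageRate P₁ lam eps₁ x₁ dx₁ + storageRate P₂ lam eps₂ x₂ dx₂ := by
  have hmin₁ : min eps₁ eps₂ * (x₁ ⬝ᵥ x₁) ≤ eps₁ * (x₁ ⬝ᵥ x₁) :=
    mul_le_mul_of_nonneg_right (min_le_left _ _) (dotProduct_self_star_nonneg x₁)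
  have hmin₂ : min eps₁ eps₂ * (x₂ ⬝ᵥ x₂) ≤ eps₂ * (x₂ ⬝ᵥ x₂) :=
    mul_le_mul_of_nonneg_right (min_le_right _ _) (dotProduct_self_star_nonneg x₂)
  simp only [storageRate, fromBlocks_mulVec, sumElim_dotProduct_sumElim, zero_mulVec, add_zero,
    zero_add, Sum.elim_comp_inl, Sum.elim_comp_inr]
  linarith

theorem supplyRate_add_supplyRate_feedback (Q₁ : Matrix k k ℝ) (L₁ : Matrix k l ℝ)
    (R₁ : Matrix l l ℝ) (Q₂ : Matrix l l ℝ) (L₂ : Matrix l k ℝ) (R₂ : Matrix k k ℝ)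
    (y₁ : k → ℝ) (y₂ : l → ℝ) :
    supplyRate Q₁ L₁ R₁ y₁ (-y₂) + supplyRate Q₂ L₂ R₂ y₂ y₁ =
      quadForm (fromBlocks (Q₁ + R₂) (-L₁ + L₂ᵀ) (-L₁ᵀ + L₂) (Q₂ + R₁)) (Sum.elim y₁ y₂) := by
  simp only [supplyRate, quadForm, fromBlocks_mulVec, sumElim_dotProduct_sumElim, add_mulVec,
    neg_mulVec, mulVec_neg, dotProduct_add, dotProduct_neg, neg_dotProduct, neg_neg,
    Sum.elim_comp_inl, Sum.elim_comp_inr]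
  ring

end Dissipativity

theorem quadForm_nonpos_of_posSemidef_neg {m : Type*} [Fintype m] {M : Matrix m m ℝ}
    (hM : (-M).PosSemidef) (x : m → ℝ) : quadForm M x ≤ 0 := by
  have := hM.dotProduct_mulVec_nonneg x
  rw [star_trivial, neg_mulVec, dotProduct_neg] at this
  exact neg_nonneg.mp this

theorem feedback_interconnection_dominant_general {n₁ n₂ m₁ m₂ : ℕ}
    (A₁ : Matrix (Fin n₁) (Fin n₁) ℝ) (B₁ : Matrix (Fin n₁) (Fin m₁) ℝ)
    (C₁ : Matrix (Fin m₂) (Fin n₁) ℝ) (D₁ : Matrix (Fin m₂) (Fin m₁) ℝ)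
    (A₂ : Matrix (Fin n₂) (Fin n₂) ℝ) (B₂ : Matrix (Fin n₂) (Fin m₂) ℝ)
    (C₂ : Matrix (Fin m₁) (Fin n₂) ℝ) (D₂ : Matrix (Fin m₁) (Fin m₂) ℝ)
    (P₁ : Matrix (Fin n₁) (Fin n₁) ℝ) (P₂ : Matrix (Fin n₂) (Fin n₂) ℝ)
    (Q₁ : Matrix (Fin m₂) (Fin m₂) ℝ) (L₁ : Matrix (Fin m₂) (Fin m₁) ℝ)
    (R₁ : Matrix (Fin m₁) (Fin m₁) ℝ)
    (Q₂ : Matrix (Fin m₁) (Fin m₁) ℝ) (L₂ : Matrix (Fin m₁) (Fin m₂) ℝ)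
    (R₂ : Matrix (Fin m₂) (Fin m₂) ℝ)
    (p₁ p₂ : ℕ) (lam eps₁ eps₂ : ℝ)
    (hP₁symm : P₁.IsSymm) (hP₂symm : P₂.IsSymm)
    (hP₁in : hasInertia P₁ p₁) (hP₂in : hasInertia P₂ p₂)
    (hdiss₁ : ∀ (x₁ : Fin n₁ → ℝ) (u₁ : Fin m₁ → ℝ),
      (A₁.mulVec x₁ + B₁.mulVec u₁) ⬝ᵥ P₁.mulVec x₁
        + x₁ ⬝ᵥ P₁.mulVec (A₁.mulVec x₁ + B₁.mulVec u₁)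
        + 2 * lam * (x₁ ⬝ᵥ P₁.mulVec x₁) + eps₁ * (x₁ ⬝ᵥ x₁)
      ≤ (C₁.mulVec x₁ + D₁.mulVec u₁) ⬝ᵥ Q₁.mulVec (C₁.mulVec x₁ + D₁.mulVec u₁)
        + (C₁.mulVec x₁ + D₁.mulVec u₁) ⬝ᵥ L₁.mulVec u₁
        + u₁ ⬝ᵥ L₁ᵀ.mulVec (C₁.mulVec x₁ + D₁.mulVec u₁)
        + u₁ ⬝ᵥ R₁.mulVec u₁)
    (hdiss₂ : ∀ (x₂ : Fin n₂ → ℝ) (u₂ : Fin m₂ → ℝ),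
      (A₂.mulVec x₂ + B₂.mulVec u₂) ⬝ᵥ P₂.mulVec x₂
        + x₂ ⬝ᵥ P₂.mulVec (A₂.mulVec x₂ + B₂.mulVec u₂)
        + 2 * lam * (x₂ ⬝ᵥ P₂.mulVec x₂) + eps₂ * (x₂ ⬝ᵥ x₂)
      ≤ (C₂.mulVec x₂ + D₂.mulVec u₂) ⬝ᵥ Q₂.mulVec (C₂.mulVec x₂ + D₂.mulVec u₂)
        + (C₂.mulVec x₂ + D₂.mulVec u₂) ⬝ᵥ L₂.mulVec u₂
        + u₂ ⬝ᵥ L₂ᵀ.mulVec (C₂.mulVec x₂ + D₂.mulVec u₂)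
        + u₂ ⬝ᵥ R₂.mulVec u₂)
    (hQcl : (-(Matrix.fromBlocks (Q₁ + R₂) (-L₁ + L₂ᵀ)
        (-L₁ᵀ + L₂) (Q₂ + R₁))).PosSemidef) :
    (Matrix.fromBlocks P₁ 0 0 P₂).IsSymm ∧
    hasInertia (Matrix.fromBlocks P₁ 0 0 P₂) (p₁ + p₂) ∧
    (∀ (x₁ : Fin n₁ → ℝ) (x₂ : Fin n₂ → ℝ) (u₁ : Fin m₁ → ℝ) (u₂ : Fin m₂ → ℝ)
       (y₁ : Fin m₂ → ℝ) (y₂ : Fin m₁ → ℝ),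
      y₁ = C₁.mulVec x₁ + D₁.mulVec u₁ →
      y₂ = C₂.mulVec x₂ + D₂.mulVec u₂ →
      u₁ = -y₂ →
      u₂ = y₁ →
      (Sum.elim (A₁.mulVec x₁ + B₁.mulVec u₁) (A₂.mulVec x₂ + B₂.mulVec u₂))
          ⬝ᵥ (Matrix.fromBlocks P₁ 0 0 P₂).mulVec (Sum.elim x₁ x₂)
        + (Sum.elim x₁ x₂) ⬝ᵥ (Matrix.fromBlocks P₁ 0 0 P₂).mulVec
            (Sum.elim (A₁.mulVec x₁ + B₁.mulVec u₁) (A₂.mulVec x₂ + B₂.mulVec u₂))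
        + 2 * lam * ((Sum.elim x₁ x₂) ⬝ᵥ (Matrix.fromBlocks P₁ 0 0 P₂).mulVec (Sum.elim x₁ x₂))
        + min eps₁ eps₂ * ((Sum.elim x₁ x₂) ⬝ᵥ (Sum.elim x₁ x₂))
      ≤ 0) := by
  refine ⟨hP₁symm.fromBlocks transpose_zero hP₂symm, hP₁in.fromBlocks_zero hP₂in, ?_⟩
  intro x₁ x₂ u₁ u₂ y₁ y₂ hy₁ hy₂ hu₁ hu₂
  calc _ = storageRate (fromBlocks P₁ 0 0 P₂) lam (min eps₁ eps₂) (Sum.elim x₁ x₂)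
          (Sum.elim (A₁ *ᵥ x₁ + B₁ *ᵥ u₁) (A₂ *ᵥ x₂ + B₂ *ᵥ u₂)) := rfl
    _ ≤ storageRate P₁ lam eps₁ x₁ (A₁ *ᵥ x₁ + B₁ *ᵥ u₁)
          + storageRate P₂ lam eps₂ x₂ (A₂ *ᵥ x₂ + B₂ *ᵥ u₂) :=
      storageRate_fromBlocks_zero_le ..
    _ ≤ supplyRate Q₁ L₁ R₁ y₁ u₁ + supplyRate Q₂ L₂ R₂ y₂ u₂ := by
      rw [hy₁, hy₂]
      exact add_le_add (hdiss₁ x₁ u₁) (hdiss₂ x₂ u₂)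
    _ = quadForm (fromBlocks (Q₁ + R₂) (-L₁ + L₂ᵀ) (-L₁ᵀ + L₂) (Q₂ + R₁)) (Sum.elim y₁ y₂) := by
      rw [hu₁, hu₂, supplyRate_add_supplyRate_feedback]
    _ ≤ 0 := quadForm_nonpos_of_posSemidef_neg hQcl _

/-- if moreover the closed-loop supply matrix is negative semidefinite
and v = 0, the negative feedback interconnection is (p₁+p₂)-dominant with rate λ. -/
theorem feedback_interconnection_dominant {n₁ n₂ m₁ m₂ : ℕ}
    (A₁ : Matrix (Fin n₁) (Fin n₁) ℝ) (B₁ : Matrix (Fin n₁) (Fin m₁) ℝ)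
    (C₁ : Matrix (Fin m₂) (Fin n₁) ℝ) (D₁ : Matrix (Fin m₂) (Fin m₁) ℝ)
    (A₂ : Matrix (Fin n₂) (Fin n₂) ℝ) (B₂ : Matrix (Fin n₂) (Fin m₂) ℝ)
    (C₂ : Matrix (Fin m₁) (Fin n₂) ℝ) (D₂ : Matrix (Fin m₁) (Fin m₂) ℝ)
    (P₁ : Matrix (Fin n₁) (Fin n₁) ℝ) (P₂ : Matrix (Fin n₂) (Fin n₂) ℝ)
    (Q₁ : Matrix (Fin m₂) (Fin m₂) ℝ) (L₁ : Matrix (Fin m₂) (Fin m₁) ℝ)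
    (R₁ : Matrix (Fin m₁) (Fin m₁) ℝ)
    (Q₂ : Matrix (Fin m₁) (Fin m₁) ℝ) (L₂ : Matrix (Fin m₁) (Fin m₂) ℝ)
    (R₂ : Matrix (Fin m₂) (Fin m₂) ℝ)
    (p₁ p₂ : ℕ) (lam eps₁ eps₂ : ℝ)
    (hlam : 0 ≤ lam) (heps₁ : 0 ≤ eps₁) (heps₂ : 0 ≤ eps₂)
    (hP₁symm : P₁.IsSymm) (hP₂symm : P₂.IsSymm)
    (hP₁in : hasInertia P₁ p₁) (hP₂in : hasInertia P₂ p₂)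
    (hdiss₁ : ∀ (x₁ : Fin n₁ → ℝ) (u₁ : Fin m₁ → ℝ),
      (A₁.mulVec x₁ + B₁.mulVec u₁) ⬝ᵥ P₁.mulVec x₁
        + x₁ ⬝ᵥ P₁.mulVec (A₁.mulVec x₁ + B₁.mulVec u₁)
        + 2 * lam * (x₁ ⬝ᵥ P₁.mulVec x₁) + eps₁ * (x₁ ⬝ᵥ x₁)
      ≤ (C₁.mulVec x₁ + D₁.mulVec u₁) ⬝ᵥ Q₁.mulVec (C₁.mulVec x₁ + D₁.mulVec u₁)
        + (C₁.mulVec x₁ + D₁.mulVec u₁) ⬝ᵥ L₁.mulVec u₁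
        + u₁ ⬝ᵥ L₁ᵀ.mulVec (C₁.mulVec x₁ + D₁.mulVec u₁)
        + u₁ ⬝ᵥ R₁.mulVec u₁)
    (hdiss₂ : ∀ (x₂ : Fin n₂ → ℝ) (u₂ : Fin m₂ → ℝ),
      (A₂.mulVec x₂ + B₂.mulVec u₂) ⬝ᵥ P₂.mulVec x₂
        + x₂ ⬝ᵥ P₂.mulVec (A₂.mulVec x₂ + B₂.mulVec u₂)
        + 2 * lam * (x₂ ⬝ᵥ P₂.mulVec x₂) + eps₂ * (x₂ ⬝ᵥ x₂)
      ≤ (C₂.mulVec x₂ + D₂.mulVec u₂) ⬝ᵥ Q₂.mulVec (C₂.mulVec x₂ + D₂.mulVec u₂)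
        + (C₂.mulVec x₂ + D₂.mulVec u₂) ⬝ᵥ L₂.mulVec u₂
        + u₂ ⬝ᵥ L₂ᵀ.mulVec (C₂.mulVec x₂ + D₂.mulVec u₂)
        + u₂ ⬝ᵥ R₂.mulVec u₂)
    (hQcl : (-(Matrix.fromBlocks (Q₁ + R₂) (-L₁ + L₂ᵀ)
        (-L₁ᵀ + L₂) (Q₂ + R₁))).PosSemidef) :
    (Matrix.fromBlocks P₁ 0 0 P₂).IsSymm ∧
    hasInertia (Matrix.fromBlocks P₁ 0 0 P₂) (p₁ + p₂) ∧
    (∀ (x₁ : Fin n₁ → ℝ) (x₂ : Fin n₂ → ℝ) (u₁ : Fin m₁ → ℝ) (u₂ : Fin m₂ → ℝ)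
       (y₁ : Fin m₂ → ℝ) (y₂ : Fin m₁ → ℝ),
      y₁ = C₁.mulVec x₁ + D₁.mulVec u₁ →
      y₂ = C₂.mulVec x₂ + D₂.mulVec u₂ →
      u₁ = -y₂ →
      u₂ = y₁ →
      (Sum.elim (A₁.mulVec x₁ + B₁.mulVec u₁) (A₂.mulVec x₂ + B₂.mulVec u₂))
          ⬝ᵥ (Matrix.fromBlocks P₁ 0 0 P₂).mulVec (Sum.elim x₁ x₂)
        + (Sum.elim x₁ x₂) ⬝ᵥ (Matrix.fromBlocks P₁ 0 0 P₂).mulVec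
            (Sum.elim (A₁.mulVec x₁ + B₁.mulVec u₁) (A₂.mulVec x₂ + B₂.mulVec u₂))
        + 2 * lam * ((Sum.elim x₁ x₂) ⬝ᵥ (Matrix.fromBlocks P₁ 0 0 P₂).mulVec (Sum.elim x₁ x₂))
        + min eps₁ eps₂ * ((Sum.elim x₁ x₂) ⬝ᵥ (Sum.elim x₁ x₂))
      ≤ 0) :=
  feedback_interconnection_dominant_general A₁ B₁ C₁ D₁ A₂ B₂ C₂ D₂ P₁ P₂ Q₁ L₁ R₁ Q₂ L₂ R₂ p₁ p₂
    lam eps₁ eps₂ hP₁symm hP₂symm hP₁in hP₂in hdiss₁ hdiss₂ hQcl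
end

section
/- For i ∈ {1,2}, let fᵢ : ℝ^{nᵢ} → ℝ^{nᵢ} be continuously differentiable with Jacobian Dfᵢ(xᵢ), and let Bᵢ, Cᵢ, Dᵢ be real matrices of suitable dimensions. Suppose each system is differentially pᵢ-dissipative with common rate λ ≥ 0 and margin εᵢ ≥ 0: there is a real symmetric matrix Pᵢ with inertia pᵢ such that for all xᵢ ∈ ℝ^{nᵢ}, δxᵢ ∈ ℝ^{nᵢ}, δuᵢ, writing δẋᵢ = Dfᵢ(xᵢ)δxᵢ + Bᵢδuᵢ and δyᵢ = Cᵢδxᵢ + Dᵢδuᵢ, one has δẋᵢᵀPᵢδxᵢ + δxᵢᵀPᵢδẋᵢ + 2λ·δxᵢᵀPᵢδxᵢ + εᵢ·δxᵢᵀδxᵢ ≤ δyᵢᵀQᵢδyᵢ + δyᵢᵀLᵢδuᵢ + δuᵢᵀLᵢᵀδyᵢ + δuᵢᵀRᵢδuᵢ. Let H be an interconnection matrix and consider δu = Hδy + δv, where δu = (δu₁,δu₂), δy = (δy₁,δy₂). Then P = diag(P₁,P₂) has inertia p₁+p₂, and for every tuple (x₁,x₂,δx₁,δx₂,δu₁,δu₂,δv)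 satisfying δyᵢ = Cᵢδxᵢ + Dᵢδuᵢ (i = 1,2) and δu = Hδy + δv, writing δx = (δx₁,δx₂), δẋ = (Df₁(x₁)δx₁ + B₁δu₁, Df₂(x₂)δx₂ + B₂δu₂) and ε = min(ε₁,ε₂), one has δẋᵀPδx + δxᵀPδẋ + 2λ·δxᵀPδx + ε·δxᵀδx ≤ δyᵀQδy + δyᵀLδv + δvᵀLᵀδy + δvᵀRδv, where Q̄ = diag(Q₁,Q₂), L̄ = diag(L₁,L₂), R̄ = diag(R₁,R₂), Q = Q̄ + L̄H + HᵀL̄ᵀ + HᵀR̄H, L = L̄ + HᵀR̄, R = R̄. -/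
open Matrix

private lemma mulVec_dp {m n : Type*} [Fintype m] [Fintype n]
    (A : Matrix m n ℝ) (x : n → ℝ) (y : m → ℝ) :
    A.mulVec x ⬝ᵥ y = x ⬝ᵥ Aᵀ.mulVec y := by
  rw [Matrix.dotProduct_mulVec, Matrix.vecMul_transpose]

private lemma blockQuad {m n m' n' : Type*} [Fintype m] [Fintype n] [Fintype m'] [Fintype n']
    (M : Matrix m m' ℝ) (N : Matrix n n' ℝ) (a : m → ℝ) (c : m' → ℝ) (b : n → ℝ) (d : n' → ℝ) :
    Sum.elim a b ⬝ᵥ (Matrix.fromBlocks M 0 0 N).mulVec (Sum.elim c d)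
      = a ⬝ᵥ M.mulVec c + b ⬝ᵥ N.mulVec d := by
  rw [Matrix.fromBlocks_mulVec]
  simp [sumElim_dotProduct_sumElim]

private lemma dp_self_nonneg {m : Type*} [Fintype m] (x : m → ℝ) : 0 ≤ x ⬝ᵥ x :=
  Finset.sum_nonneg fun i _ => mul_self_nonneg (x i)

private lemma inertia_blocks {m n : Type*} [Fintype m] [Fintype n]
    [DecidableEq m] [DecidableEq n]
    (P₁ : Matrix m m ℝ) (P₂ : Matrix n n ℝ) (p₁ p₂ : ℕ)
    (h₁ : hasInertia P₁ p₁) (h₂ : hasInertia P₂ p₂) :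
    hasInertia (Matrix.fromBlocks P₁ 0 0 P₂) (p₁ + p₂) := by
  obtain ⟨h1n, h1p, h1z⟩ := h₁
  obtain ⟨h2n, h2p, h2z⟩ := h₂
  have hc : (Matrix.fromBlocks P₁ (0 : Matrix m n ℝ) 0 P₂).charpoly
      = P₁.charpoly * P₂.charpoly := Matrix.charpoly_fromBlocks_zero₂₁ P₁ 0 P₂
  have hroots : (Matrix.fromBlocks P₁ (0 : Matrix m n ℝ) 0 P₂).charpoly.roots
      = P₁.charpoly.roots + P₂.charpoly.roots := by
    rw [hc, Polynomial.roots_mul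
      (mul_ne_zero (P₁.charpoly_monic.ne_zero) (P₂.charpoly_monic.ne_zero))]
  have hle₁ : p₁ ≤ Fintype.card m := by
    rw [← h1n]
    calc Multiset.countP _ P₁.charpoly.roots ≤ Multiset.card P₁.charpoly.roots :=
          Multiset.countP_le_card _ _
      _ ≤ P₁.charpoly.natDegree := Polynomial.card_roots' _
      _ = Fintype.card m := P₁.charpoly_natDegree_eq_dim
  have hle₂ : p₂ ≤ Fintype.card n := by
    rw [← h2n]
    calc Multiset.countP _ P₂.charpoly.roots ≤ Multiset.card P₂.charpoly.roots :=
          Multiset.countP_le_card _ _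
      _ ≤ P₂.charpoly.natDegree := Polynomial.card_roots' _
      _ = Fintype.card n := P₂.charpoly_natDegree_eq_dim
  refine ⟨?_, ?_, ?_⟩
  · rw [hroots, Multiset.countP_add, h1n, h2n]
  · rw [hroots, Multiset.countP_add, h1p, h2p, Fintype.card_sum]
    omega
  · rw [hroots, Multiset.mem_add]
    rintro (h | h)
    exacts [h1z h, h2z h]

/-- interconnection δu = H δy + δv of two differentially
pᵢ-dissipative systems is differentially (p₁+p₂)-dissipative with the stated
differential supply rate. -/
theorem differential_interconnection_dissipative {n₁ n₂ m₁ m₂ k₁ k₂ : ℕ}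
    (f₁ : (Fin n₁ → ℝ) → (Fin n₁ → ℝ)) (f₂ : (Fin n₂ → ℝ) → (Fin n₂ → ℝ))
    (J₁ : (Fin n₁ → ℝ) → Matrix (Fin n₁) (Fin n₁) ℝ)
    (J₂ : (Fin n₂ → ℝ) → Matrix (Fin n₂) (Fin n₂) ℝ)
    (hf₁ : ContDiff ℝ 1 f₁) (hf₂ : ContDiff ℝ 1 f₂)
    (hJ₁ : IsJacobianOf J₁ f₁) (hJ₂ : IsJacobianOf J₂ f₂)
    (B₁ : Matrix (Fin n₁) (Fin m₁) ℝ) (C₁ : Matrix (Fin k₁) (Fin n₁) ℝ)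
    (D₁ : Matrix (Fin k₁) (Fin m₁) ℝ)
    (B₂ : Matrix (Fin n₂) (Fin m₂) ℝ) (C₂ : Matrix (Fin k₂) (Fin n₂) ℝ)
    (D₂ : Matrix (Fin k₂) (Fin m₂) ℝ)
    (P₁ : Matrix (Fin n₁) (Fin n₁) ℝ) (P₂ : Matrix (Fin n₂) (Fin n₂) ℝ)
    (Q₁ : Matrix (Fin k₁) (Fin k₁) ℝ) (L₁ : Matrix (Fin k₁) (Fin m₁) ℝ)
    (R₁ : Matrix (Fin m₁) (Fin m₁) ℝ)
    (Q₂ : Matrix (Fin k₂) (Fin k₂) ℝ) (L₂ : Matrix (Fin k₂) (Fin m₂) ℝ)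
    (R₂ : Matrix (Fin m₂) (Fin m₂) ℝ)
    (H : Matrix (Fin m₁ ⊕ Fin m₂) (Fin k₁ ⊕ Fin k₂) ℝ)
    (p₁ p₂ : ℕ) (lam eps₁ eps₂ : ℝ)
    (hlam : 0 ≤ lam) (heps₁ : 0 ≤ eps₁) (heps₂ : 0 ≤ eps₂)
    (hP₁symm : P₁.IsSymm) (hP₂symm : P₂.IsSymm)
    (hP₁in : hasInertia P₁ p₁) (hP₂in : hasInertia P₂ p₂)
    (hQ₁ : Q₁.IsSymm) (hR₁ : R₁.IsSymm) (hQ₂ : Q₂.IsSymm) (hR₂ : R₂.IsSymm)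
    (hdiss₁ : ∀ (x₁ δx₁ : Fin n₁ → ℝ) (δu₁ : Fin m₁ → ℝ),
      ((J₁ x₁).mulVec δx₁ + B₁.mulVec δu₁) ⬝ᵥ P₁.mulVec δx₁
        + δx₁ ⬝ᵥ P₁.mulVec ((J₁ x₁).mulVec δx₁ + B₁.mulVec δu₁)
        + 2 * lam * (δx₁ ⬝ᵥ P₁.mulVec δx₁) + eps₁ * (δx₁ ⬝ᵥ δx₁)
      ≤ (C₁.mulVec δx₁ + D₁.mulVec δu₁) ⬝ᵥ Q₁.mulVec (C₁.mulVec δx₁ + D₁.mulVec δu₁)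
        + (C₁.mulVec δx₁ + D₁.mulVec δu₁) ⬝ᵥ L₁.mulVec δu₁
        + δu₁ ⬝ᵥ L₁ᵀ.mulVec (C₁.mulVec δx₁ + D₁.mulVec δu₁)
        + δu₁ ⬝ᵥ R₁.mulVec δu₁)
    (hdiss₂ : ∀ (x₂ δx₂ : Fin n₂ → ℝ) (δu₂ : Fin m₂ → ℝ),
      ((J₂ x₂).mulVec δx₂ + B₂.mulVec δu₂) ⬝ᵥ P₂.mulVec δx₂
        + δx₂ ⬝ᵥ P₂.mulVec ((J₂ x₂).mulVec δx₂ + B₂.mulVec δu₂)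
        + 2 * lam * (δx₂ ⬝ᵥ P₂.mulVec δx₂) + eps₂ * (δx₂ ⬝ᵥ δx₂)
      ≤ (C₂.mulVec δx₂ + D₂.mulVec δu₂) ⬝ᵥ Q₂.mulVec (C₂.mulVec δx₂ + D₂.mulVec δu₂)
        + (C₂.mulVec δx₂ + D₂.mulVec δu₂) ⬝ᵥ L₂.mulVec δu₂
        + δu₂ ⬝ᵥ L₂ᵀ.mulVec (C₂.mulVec δx₂ + D₂.mulVec δu₂)
        + δu₂ ⬝ᵥ R₂.mulVec δu₂) :
    hasInertia (Matrix.fromBlocks P₁ 0 0 P₂) (p₁ + p₂) ∧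
    (∀ (x₁ : Fin n₁ → ℝ) (x₂ : Fin n₂ → ℝ) (δx₁ : Fin n₁ → ℝ) (δx₂ : Fin n₂ → ℝ)
       (δu₁ : Fin m₁ → ℝ) (δu₂ : Fin m₂ → ℝ) (δv : Fin m₁ ⊕ Fin m₂ → ℝ)
       (δy₁ : Fin k₁ → ℝ) (δy₂ : Fin k₂ → ℝ),
      δy₁ = C₁.mulVec δx₁ + D₁.mulVec δu₁ →
      δy₂ = C₂.mulVec δx₂ + D₂.mulVec δu₂ →
      Sum.elim δu₁ δu₂ = H.mulVec (Sum.elim δy₁ δy₂) + δv →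
      (Sum.elim ((J₁ x₁).mulVec δx₁ + B₁.mulVec δu₁) ((J₂ x₂).mulVec δx₂ + B₂.mulVec δu₂))
          ⬝ᵥ (Matrix.fromBlocks P₁ 0 0 P₂).mulVec (Sum.elim δx₁ δx₂)
        + (Sum.elim δx₁ δx₂) ⬝ᵥ (Matrix.fromBlocks P₁ 0 0 P₂).mulVec
            (Sum.elim ((J₁ x₁).mulVec δx₁ + B₁.mulVec δu₁) ((J₂ x₂).mulVec δx₂ + B₂.mulVec δu₂))
        + 2 * lam * ((Sum.elim δx₁ δx₂) ⬝ᵥ (Matrix.fromBlocks P₁ 0 0 P₂).mulVec (Sum.elim δx₁ δx₂))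
        + min eps₁ eps₂ * ((Sum.elim δx₁ δx₂) ⬝ᵥ (Sum.elim δx₁ δx₂))
      ≤ (Sum.elim δy₁ δy₂) ⬝ᵥ
            (Matrix.fromBlocks Q₁ 0 0 Q₂ + Matrix.fromBlocks L₁ 0 0 L₂ * H
              + Hᵀ * (Matrix.fromBlocks L₁ 0 0 L₂)ᵀ
              + Hᵀ * Matrix.fromBlocks R₁ 0 0 R₂ * H).mulVec (Sum.elim δy₁ δy₂)
        + (Sum.elim δy₁ δy₂) ⬝ᵥ
            (Matrix.fromBlocks L₁ 0 0 L₂ + Hᵀ * Matrix.fromBlocks R₁ 0 0 R₂).mulVec δv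
        + δv ⬝ᵥ (Matrix.fromBlocks L₁ 0 0 L₂ + Hᵀ * Matrix.fromBlocks R₁ 0 0 R₂)ᵀ.mulVec
            (Sum.elim δy₁ δy₂)
        + δv ⬝ᵥ (Matrix.fromBlocks R₁ 0 0 R₂).mulVec δv) := by
  constructor
  · exact inertia_blocks P₁ P₂ p₁ p₂ hP₁in hP₂in
  · intro x₁ x₂ δx₁ δx₂ δu₁ δu₂ δv δy₁ δy₂ hy₁ hy₂ hu
    set y : Fin k₁ ⊕ Fin k₂ → ℝ := Sum.elim δy₁ δy₂ with hy
    have hR : (Matrix.fromBlocks R₁ 0 0 R₂)ᵀ = Matrix.fromBlocks R₁ 0 0 R₂ := by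
      rw [Matrix.fromBlocks_transpose, hR₁.eq, hR₂.eq]
      simp
    have h1 := hdiss₁ x₁ δx₁ δu₁
    have h2 := hdiss₂ x₂ δx₂ δu₂
    have hmin : min eps₁ eps₂ * (δx₁ ⬝ᵥ δx₁ + δx₂ ⬝ᵥ δx₂)
        ≤ eps₁ * (δx₁ ⬝ᵥ δx₁) + eps₂ * (δx₂ ⬝ᵥ δx₂) := by
      have := dp_self_nonneg δx₁
      have := dp_self_nonneg δx₂
      have := min_le_left eps₁ eps₂
      have := min_le_right eps₁ eps₂
      nlinarith
    -- LHS of goal ≤ sum of LHS of h1, h2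
    have hL : (Sum.elim ((J₁ x₁).mulVec δx₁ + B₁.mulVec δu₁) ((J₂ x₂).mulVec δx₂ + B₂.mulVec δu₂))
          ⬝ᵥ (Matrix.fromBlocks P₁ 0 0 P₂).mulVec (Sum.elim δx₁ δx₂)
        + (Sum.elim δx₁ δx₂) ⬝ᵥ (Matrix.fromBlocks P₁ 0 0 P₂).mulVec
            (Sum.elim ((J₁ x₁).mulVec δx₁ + B₁.mulVec δu₁) ((J₂ x₂).mulVec δx₂ + B₂.mulVec δu₂))
        + 2 * lam * ((Sum.elim δx₁ δx₂) ⬝ᵥ (Matrix.fromBlocks P₁ 0 0 P₂).mulVec (Sum.elim δx₁ δx₂))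
        + min eps₁ eps₂ * ((Sum.elim δx₁ δx₂) ⬝ᵥ (Sum.elim δx₁ δx₂))
        ≤ (((J₁ x₁).mulVec δx₁ + B₁.mulVec δu₁) ⬝ᵥ P₁.mulVec δx₁
            + δx₁ ⬝ᵥ P₁.mulVec ((J₁ x₁).mulVec δx₁ + B₁.mulVec δu₁)
            + 2 * lam * (δx₁ ⬝ᵥ P₁.mulVec δx₁) + eps₁ * (δx₁ ⬝ᵥ δx₁))
          + (((J₂ x₂).mulVec δx₂ + B₂.mulVec δu₂) ⬝ᵥ P₂.mulVec δx₂
            + δx₂ ⬝ᵥ P₂.mulVec ((J₂ x₂).mulVec δx₂ + B₂.mulVec δu₂)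
            + 2 * lam * (δx₂ ⬝ᵥ P₂.mulVec δx₂) + eps₂ * (δx₂ ⬝ᵥ δx₂)) := by
      rw [blockQuad, blockQuad, blockQuad, sumElim_dotProduct_sumElim]
      nlinarith [hmin]
    refine le_trans hL (le_trans (add_le_add h1 h2) (le_of_eq ?_))
    -- now an algebraic identity
    rw [← hy₁, ← hy₂]
    have hsum : δy₁ ⬝ᵥ Q₁.mulVec δy₁ + δy₁ ⬝ᵥ L₁.mulVec δu₁ + δu₁ ⬝ᵥ L₁ᵀ.mulVec δy₁
          + δu₁ ⬝ᵥ R₁.mulVec δu₁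
        + (δy₂ ⬝ᵥ Q₂.mulVec δy₂ + δy₂ ⬝ᵥ L₂.mulVec δu₂ + δu₂ ⬝ᵥ L₂ᵀ.mulVec δy₂
          + δu₂ ⬝ᵥ R₂.mulVec δu₂)
        = y ⬝ᵥ (Matrix.fromBlocks Q₁ 0 0 Q₂).mulVec y
          + y ⬝ᵥ (Matrix.fromBlocks L₁ 0 0 L₂).mulVec (Sum.elim δu₁ δu₂)
          + (Sum.elim δu₁ δu₂) ⬝ᵥ (Matrix.fromBlocks L₁ 0 0 L₂)ᵀ.mulVec y
          + (Sum.elim δu₁ δu₂) ⬝ᵥ (Matrix.fromBlocks R₁ 0 0 R₂).mulVec (Sum.elim δu₁ δu₂) := by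
      simp only [Matrix.fromBlocks_transpose, Matrix.transpose_zero, hy, blockQuad]
      ring
    rw [hsum, hu]
    simp only [Matrix.add_mulVec, Matrix.mulVec_add, dotProduct_add,
      add_dotProduct, ← Matrix.mulVec_mulVec, Matrix.transpose_add,
      Matrix.transpose_mul, Matrix.transpose_transpose, mulVec_dp, hR]
    ring
end

section
/- Let f : ℝⁿ → ℝⁿ be continuously differentiable with Jacobian Df(x), let λ ≥ 0, ε ≥ 0, and let P be a real symmetric n×n matrix such that Df(x)ᵀP + P·Df(x) ⪯ −2λP − εI for all x ∈ ℝⁿ. Then for all x, y ∈ ℝⁿ: (x−y)ᵀP(f(x)−f(y)) + (f(x)−f(y))ᵀP(x−y) ≤ −2λ·(x−y)ᵀP(x−y) − ε·|x−y|², where |·| denotes the Euclidean norm. -/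
/-!
With `v = x - y`, the left-hand side is `ℓ (f x) - ℓ (f y)` for the linear functional
`ℓ u = vᵀ (P + Pᵀ) u`. Along the segment from `y` to `x` the derivative of `ℓ ∘ f` in direction `v`
is `ℓ (Df v) = vᵀ (Dfᵀ P + P Df) v`, which the LMI bounds by the right-hand side; the mean value
inequality transfers this bound to the increment.
-/

open Matrix

theorem sub_le_of_forall_fderiv_apply_le {E : Type*} [NormedAddCommGroup E] [NormedSpace ℝ E]
    {g : E → ℝ} {g' : E → E →L[ℝ] ℝ} (hg : ∀ x, HasFDerivAt g (g' x) x) {v : E} {C : ℝ}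
    (hC : ∀ x, g' x v ≤ C) (y : E) : g (y + v) - g y ≤ C := by
  have hline : ∀ t : ℝ, HasDerivAt (fun t => g (y + t • v)) (g' (y + t • v) v) t := fun t =>
    (hg _).comp_hasDerivAt t (by simpa using ((hasDerivAt_id t).smul_const v).const_add y)
  simpa using image_sub_le_mul_sub_of_deriv_le (fun t => (hline t).differentiableAt)
    (fun t => (hline t).deriv ▸ hC _) zero_le_one

namespace Matrix

variable {m : Type*} [Fintype m] {R : Type*} [CommSemiring R]

theorem dotProduct_mulVec_add_mulVec_dotProduct (P : Matrix m m R) (u v : m → R) :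
    v ⬝ᵥ P *ᵥ u + u ⬝ᵥ P *ᵥ v = v ⬝ᵥ (P + Pᵀ) *ᵥ u := by
  rw [add_mulVec, dotProduct_add, dotProduct_transpose_mulVec]

theorem dotProduct_transpose_mul_add_mul_mulVec (P A : Matrix m m R) (v : m → R) :
    v ⬝ᵥ (Aᵀ * P + P * A) *ᵥ v = v ⬝ᵥ (P + Pᵀ) *ᵥ (A *ᵥ v) := by
  rw [add_mulVec, ← mulVec_mulVec, ← mulVec_mulVec, dotProduct_add, dotProduct_transpose_mulVec,
    dotProduct_comm, ← dotProduct_mulVec_add_mulVec_dotProduct, add_comm]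

end Matrix

theorem matLE.dotProduct_mulVec_le {m : Type*} [Fintype m] {M N : Matrix m m ℝ} (h : matLE M N)
    (v : m → ℝ) : v ⬝ᵥ M *ᵥ v ≤ v ⬝ᵥ N *ᵥ v := by
  have := h.dotProduct_mulVec_nonneg v
  rw [star_trivial, sub_mulVec, dotProduct_sub] at this
  linarith

theorem differential_lmi_implies_incremental_general {n : ℕ}
    (f : (Fin n → ℝ) → (Fin n → ℝ)) (J : (Fin n → ℝ) → Matrix (Fin n) (Fin n) ℝ)
    (hJ : IsJacobianOf J f)
    (P : Matrix (Fin n) (Fin n) ℝ)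
    (lam eps : ℝ)
    (hLMI : ∀ x : Fin n → ℝ, matLE ((J x)ᵀ * P + P * J x)
      (-((2 * lam) • P) - eps • (1 : Matrix (Fin n) (Fin n) ℝ))) :
    ∀ x y : Fin n → ℝ,
      (x - y) ⬝ᵥ P.mulVec (f x - f y) + (f x - f y) ⬝ᵥ P.mulVec (x - y)
        ≤ -(2 * lam) * ((x - y) ⬝ᵥ P.mulVec (x - y)) - eps * ((x - y) ⬝ᵥ (x - y)) := by
  intro x y
  set v := x - y
  let ℓ : (Fin n → ℝ) →L[ℝ] ℝ := (Matrix.toLinearMap₂' ℝ (P + Pᵀ) v).toContinuousLinearMap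
  have hℓ : ∀ u, ℓ u = v ⬝ᵥ (P + Pᵀ) *ᵥ u := Matrix.toLinearMap₂'_apply' _ v
  have hbound : ∀ z, ℓ (J z *ᵥ v) ≤ -(2 * lam) * (v ⬝ᵥ P *ᵥ v) - eps * (v ⬝ᵥ v) := fun z => by
    have := (hLMI z).dotProduct_mulVec_le v
    rw [dotProduct_transpose_mul_add_mul_mulVec, ← hℓ] at this
    simpa [sub_mulVec, neg_mulVec, smul_mulVec, dotProduct_sub] using this
  have hmvt := sub_le_of_forall_fderiv_apply_le (fun z => ℓ.hasFDerivAt.comp z (hJ z)) hbound y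
  rwa [add_sub_cancel, Function.comp_apply, Function.comp_apply, ← map_sub, hℓ,
    ← dotProduct_mulVec_add_mulVec_dotProduct] at hmvt

/-- the pointwise differential LMI implies the incremental inequality. -/
theorem differential_lmi_implies_incremental {n : ℕ}
    (f : (Fin n → ℝ) → (Fin n → ℝ)) (J : (Fin n → ℝ) → Matrix (Fin n) (Fin n) ℝ)
    (hf : ContDiff ℝ 1 f) (hJ : IsJacobianOf J f)
    (P : Matrix (Fin n) (Fin n) ℝ) (hPsymm : P.IsSymm)
    (lam eps : ℝ) (hlam : 0 ≤ lam) (heps : 0 ≤ eps)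
    (hLMI : ∀ x : Fin n → ℝ, matLE ((J x)ᵀ * P + P * J x)
      (-((2 * lam) • P) - eps • (1 : Matrix (Fin n) (Fin n) ℝ))) :
    ∀ x y : Fin n → ℝ,
      (x - y) ⬝ᵥ P.mulVec (f x - f y) + (f x - f y) ⬝ᵥ P.mulVec (x - y)
        ≤ -(2 * lam) * ((x - y) ⬝ᵥ P.mulVec (x - y)) - eps * ((x - y) ⬝ᵥ (x - y)) :=
  differential_lmi_implies_incremental_general f J hJ P lam eps hLMI
end

section
/- Let f : ℝⁿ → ℝⁿ be continuously differentiable with Jacobian Df(x), let ε > 0, and let P be a real symmetric n×n matrix such that Df(x)ᵀP + P·Df(x) ⪯ −εI for all x ∈ ℝⁿ (strict dominance with rate λ = 0). Then f is injective: f(x) = f(y) implies x = y. -/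
/-!
For `x ≠ y` put `v = x - y`. The scalar function `t ↦ vᵀ P f(y + t v)` has derivative
`vᵀ P Df v = ½ vᵀ (DfᵀP + P Df) v ≤ -(ε/2) |v|² < 0`, so it is strictly decreasing and
takes different values at `t = 0` and `t = 1`, i.e. at `f y` and `f x`.
-/

open Matrix

theorem Matrix.IsSymm.dotProduct_transpose_mul_add_mul_mulVec {m R : Type*} [Fintype m]
    [CommSemiring R] {P : Matrix m m R} (hP : P.IsSymm) (A : Matrix m m R) (v : m → R) :
    v ⬝ᵥ (Aᵀ * P + P * A) *ᵥ v = 2 * (v ⬝ᵥ P *ᵥ (A *ᵥ v)) := by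
  have hswap : v ⬝ᵥ (Aᵀ * P) *ᵥ v = v ⬝ᵥ P *ᵥ (A *ᵥ v) := by
    rw [← mulVec_mulVec, dotProduct_mulVec, vecMul_transpose, dotProduct_comm,
      ← vecMul_transpose, hP.eq, ← dotProduct_mulVec]
  rw [add_mulVec, dotProduct_add, hswap, ← mulVec_mulVec, two_mul]

theorem matLE.dotProduct_mulVec_mulVec_neg {m : Type*} [Fintype m] [DecidableEq m]
    {A P : Matrix m m ℝ} (hP : P.IsSymm) {ε : ℝ} (hε : 0 < ε)
    (h : matLE (Aᵀ * P + P * A) (-(ε • 1))) {v : m → ℝ} (hv : v ≠ 0) :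
    v ⬝ᵥ P *ᵥ (A *ᵥ v) < 0 := by
  have hle := h.dotProduct_mulVec_le v
  rw [hP.dotProduct_transpose_mul_add_mul_mulVec, neg_mulVec, smul_mulVec, one_mulVec,
    dotProduct_neg, dotProduct_smul, smul_eq_mul] at hle
  have hvv : 0 < v ⬝ᵥ v := by simpa using dotProduct_star_self_pos_iff.mpr hv
  nlinarith [mul_pos hε hvv]

theorem IsJacobianOf.hasDerivAt_dotProduct_comp_line {n : ℕ}
    {f : (Fin n → ℝ) → Fin n → ℝ} {J : (Fin n → ℝ) → Matrix (Fin n) (Fin n) ℝ}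
    (hJ : IsJacobianOf J f) (u x v : Fin n → ℝ) (t : ℝ) :
    HasDerivAt (fun t : ℝ => u ⬝ᵥ f (x + t • v)) (u ⬝ᵥ J (x + t • v) *ᵥ v) t := by
  have hline : HasDerivAt (fun t : ℝ => x + t • v) v t := by
    simpa using ((hasDerivAt_id t).smul_const v).const_add x
  have hcomp : HasDerivAt (fun t : ℝ => f (x + t • v)) (J (x + t • v) *ᵥ v) t := by
    exact (hJ (x + t • v)).comp_hasDerivAt t hline
  exact (dotProductBilin ℝ ℝ u).toContinuousLinearMap.hasFDerivAt.comp_hasDerivAt t hcomp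

theorem strict_zero_dominance_implies_injective_general {n : ℕ}
    (f : (Fin n → ℝ) → (Fin n → ℝ)) (J : (Fin n → ℝ) → Matrix (Fin n) (Fin n) ℝ)
    (hJ : IsJacobianOf J f)
    (P : Matrix (Fin n) (Fin n) ℝ) (hPsymm : P.IsSymm)
    (eps : ℝ) (heps : 0 < eps)
    (hLMI : ∀ x : Fin n → ℝ, matLE ((J x)ᵀ * P + P * J x)
      (-(eps • (1 : Matrix (Fin n) (Fin n) ℝ)))) :
    Function.Injective f := by
  intro x y hxy
  by_contra hne
  set v := x - y
  have hv : v ≠ 0 := sub_ne_zero.mpr hne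
  have hanti : StrictAnti fun t : ℝ => (v ᵥ* P) ⬝ᵥ f (y + t • v) := by
    refine strictAnti_of_hasDerivAt_neg (fun t => hJ.hasDerivAt_dotProduct_comp_line _ y v t)
      fun t => ?_
    rw [← dotProduct_mulVec]
    exact (hLMI _).dotProduct_mulVec_mulVec_neg hPsymm heps hv
  have hend : y + v = x := by simp [v]
  simpa [hend, hxy] using hanti zero_lt_one

/-- strict dominance with rate λ = 0 implies injectivity of f. -/
theorem strict_zero_dominance_implies_injective {n : ℕ}
    (f : (Fin n → ℝ) → (Fin n → ℝ)) (J : (Fin n → ℝ) → Matrix (Fin n) (Fin n) ℝ)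
    (hf : ContDiff ℝ 1 f) (hJ : IsJacobianOf J f)
    (P : Matrix (Fin n) (Fin n) ℝ) (hPsymm : P.IsSymm)
    (eps : ℝ) (heps : 0 < eps)
    (hLMI : ∀ x : Fin n → ℝ, matLE ((J x)ᵀ * P + P * J x)
      (-(eps • (1 : Matrix (Fin n) (Fin n) ℝ)))) :
    Function.Injective f :=
  strict_zero_dominance_implies_injective_general f J hJ P hPsymm eps heps hLMI
end

section
/- Let f : ℝⁿ → ℝⁿ be continuously differentiable with Jacobian Df(x), let λ ≥ 0, ε > 0, and let P be a real symmetric positive definite n×n matrix (inertia 0) such that Df(x)ᵀP + P·Df(x) ⪯ −2λP − εI for all x ∈ ℝⁿ. Then f has at most one zero: if f(a) = 0 and f(b) = 0 then a = b. -/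
open Matrix

theorem dotProduct_mulVec_neg_of_matLE {m : Type*} [Fintype m] [DecidableEq m]
    {P A : Matrix m m ℝ} (hP : P.PosDef) {lam eps : ℝ} (hlam : 0 ≤ lam) (heps : 0 < eps)
    (hLMI : matLE (Aᵀ * P + P * A) (-((2 * lam) • P) - eps • (1 : Matrix m m ℝ)))
    {v : m → ℝ} (hv : v ≠ 0) :
    v ⬝ᵥ P *ᵥ (A *ᵥ v) < 0 := by
  have hgap := hLMI.dotProduct_mulVec_nonneg v
  have hPv : 0 < v ⬝ᵥ P *ᵥ v := by simpa using hP.dotProduct_mulVec_pos hv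
  have hvv : 0 < v ⬝ᵥ v := dotProduct_self_star_pos_iff.mpr hv
  simp only [star_trivial, sub_mulVec, neg_mulVec, smul_mulVec, one_mulVec, dotProduct_sub,
    dotProduct_neg, dotProduct_smul, smul_eq_mul,
    (isHermitian_iff_isSymm.mp hP.isHermitian).dotProduct_transpose_mul_add_mul_mulVec] at hgap
  nlinarith [mul_nonneg hlam hPv.le]

theorem apply_lt_apply_of_hasFDerivAt_of_apply_neg {E F : Type*} [NormedAddCommGroup E]
    [NormedSpace ℝ E] [NormedAddCommGroup F] [NormedSpace ℝ F] {f : E → F} {f' : E → E →L[ℝ] F}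
    (hf : ∀ x, HasFDerivAt f (f' x) x) (ℓ : F →L[ℝ] ℝ) {a b : E}
    (hneg : ∀ x, ℓ (f' x (a - b)) < 0) :
    ℓ (f a) < ℓ (f b) := by
  set g : ℝ → ℝ := fun t => ℓ (f (b + t • (a - b)))
  have hg : ∀ t, HasDerivAt g (ℓ (f' (b + t • (a - b)) (a - b))) t := fun t => by
    have hline : HasDerivAt (fun t : ℝ => b + t • (a - b)) (a - b) t := by
      simpa using ((hasDerivAt_id t).smul_const (a - b)).const_add b
    exact ℓ.hasFDerivAt.comp_hasDerivAt t ((hf _).comp_hasDerivAt t hline)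
  have hanti : StrictAnti g := strictAnti_of_deriv_neg fun t => (hg t).deriv ▸ hneg _
  simpa [g] using hanti zero_lt_one

theorem posdef_storage_unique_zero_general {n : ℕ}
    (f : (Fin n → ℝ) → (Fin n → ℝ)) (J : (Fin n → ℝ) → Matrix (Fin n) (Fin n) ℝ)
    (hJ : IsJacobianOf J f)
    (P : Matrix (Fin n) (Fin n) ℝ) (hPpos : P.PosDef)
    (lam eps : ℝ) (hlam : 0 ≤ lam) (heps : 0 < eps)
    (hLMI : ∀ x : Fin n → ℝ, matLE ((J x)ᵀ * P + P * J x)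
      (-((2 * lam) • P) - eps • (1 : Matrix (Fin n) (Fin n) ℝ))) :
    ∀ a b : Fin n → ℝ, f a = 0 → f b = 0 → a = b := by
  intro a b ha hb
  by_contra hab
  set v := a - b
  have hv : v ≠ 0 := sub_ne_zero.mpr hab
  let ℓ : (Fin n → ℝ) →L[ℝ] ℝ := (dotProductBilin ℝ ℝ (v ᵥ* P)).toContinuousLinearMap
  have hdecr : ℓ (f a) < ℓ (f b) :=
    apply_lt_apply_of_hasFDerivAt_of_apply_neg hJ ℓ fun x => by
      have hx := dotProduct_mulVec_neg_of_matLE hPpos hlam heps (hLMI x) hv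
      rwa [dotProduct_mulVec] at hx
  simp [ha, hb] at hdecr

/-- with a positive definite storage (inertia 0), f has at most one zero. -/
theorem posdef_storage_unique_zero {n : ℕ}
    (f : (Fin n → ℝ) → (Fin n → ℝ)) (J : (Fin n → ℝ) → Matrix (Fin n) (Fin n) ℝ)
    (hf : ContDiff ℝ 1 f) (hJ : IsJacobianOf J f)
    (P : Matrix (Fin n) (Fin n) ℝ) (hPsymm : P.IsSymm) (hPpos : P.PosDef)
    (lam eps : ℝ) (hlam : 0 ≤ lam) (heps : 0 < eps)
    (hLMI : ∀ x : Fin n → ℝ, matLE ((J x)ᵀ * P + P * J x)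
      (-((2 * lam) • P) - eps • (1 : Matrix (Fin n) (Fin n) ℝ))) :
    ∀ a b : Fin n → ℝ, f a = 0 → f b = 0 → a = b :=
  posdef_storage_unique_zero_general f J hJ P hPpos lam eps hlam heps hLMI
end
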